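/- arXiv:1204.5062 — 11 statements merged into one kernel-verified Lean document; each statement's English description precedes it below -/
import Mathlib

section
/- Let Φ be a frame for 𝕂^n (𝕂 = ℝ or ℂ) consisting of m vectors, i.e., a matrix Φ ∈ 𝕂^{n×m} of rank n. Then there exists a dual frame Ψ of Φ (a matrix Ψ ∈ 𝕂^{n×m} with Ψ Φ* = I_n) such that ‖Ψ‖₀ ≤ n², i.e., Ψ has at most n² non-vanishing entries. -/
/-!
A frame `Φ` has `n` linearly independent columns, indexed by `f : Fin n → Fin m`, so the square
submatrix `A = Φ.submatrix id f` is invertible. Putting the columns of `(Aᴴ)⁻¹` at the positions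
`f` and zeros elsewhere gives a dual frame with at most `n` nonzero columns.
-/

open Matrix

/-- The number of non-vanishing entries of a matrix (the `ℓ₀`-"norm"). -/
noncomputable def l0Norm {𝕂 : Type} [RCLike 𝕂] {n m : ℕ}
    (Ψ : Matrix (Fin n) (Fin m) 𝕂) : ℕ :=
  Set.ncard {p : Fin n × Fin m | Ψ p.1 p.2 ≠ 0}

namespace Matrix

theorem exists_isUnit_submatrix_of_rank_eq_card {K κ ι : Type} [Field K] [Fintype κ]
    [DecidableEq κ] [Fintype ι] (A : Matrix κ ι K) (hA : A.rank = Fintype.card κ) :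
    ∃ f : κ → ι, IsUnit (A.submatrix id f) := by
  have hspan : Submodule.span K (Set.range A.col) = ⊤ := by
    apply Submodule.eq_top_of_finrank_eq
    rw [← rank_eq_finrank_span_cols, hA, Module.finrank_fintype_fun_eq_card]
  obtain ⟨κ', a, -, hsp, hli⟩ := exists_linearIndependent'.{0} K A.col
  let B : Module.Basis κ' K (κ → K) := .mk hli (by rw [hsp, hspan])
  let e : κ ≃ κ' := (Pi.basisFun K κ).indexEquiv B
  refine ⟨a ∘ e, ?_⟩
  rw [← linearIndependent_cols_iff_isUnit]
  exact hli.comp e e.injective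

theorem mul_one_submatrix_apply_of_notMem_range {α ι κ ν : Type} [NonAssocSemiring α]
    [Fintype κ] [DecidableEq ι] (C : Matrix ν κ α) (f : κ → ι) (i : ν) {j : ι}
    (hj : j ∉ Set.range f) : (C * (1 : Matrix ι ι α).submatrix f id) i j = 0 := by
  refine Finset.sum_eq_zero fun k _ => ?_
  change C i k * (1 : Matrix ι ι α) (f k) j = 0
  rw [one_apply_ne fun h => hj ⟨k, h⟩, mul_zero]

theorem one_submatrix_id_mul {α ι κ ν : Type} [NonAssocSemiring α] [Fintype ι] [DecidableEq ι]
    (f : κ → ι) (M : Matrix ι ν α) : (1 : Matrix ι ι α).submatrix f id * M = M.submatrix f id := by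
  simpa using one_submatrix_mul f (Equiv.refl ι) M

end Matrix

theorem l0Norm_le_of_apply_eq_zero_of_notMem_range {𝕂 : Type} [RCLike 𝕂] {n m k : ℕ}
    {Ψ : Matrix (Fin n) (Fin m) 𝕂} (f : Fin k → Fin m)
    (hΨ : ∀ i j, j ∉ Set.range f → Ψ i j = 0) : l0Norm Ψ ≤ n * k := by
  have hsupp : {p : Fin n × Fin m | Ψ p.1 p.2 ≠ 0} ⊆ Set.univ ×ˢ Set.range f :=
    fun p hp => ⟨trivial, not_imp_comm.mp (hΨ p.1 p.2) hp⟩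
  calc l0Norm Ψ ≤ (Set.univ ×ˢ Set.range f).ncard := Set.ncard_le_ncard hsupp
    _ = n * (Set.range f).ncard := by rw [Set.ncard_prod, Set.ncard_univ, Nat.card_fin]
    _ ≤ n * k := by
        gcongr
        simpa using Set.ncard_image_le (f := f) (s := Set.univ)

/-- Any frame `Φ` for `𝕂^n` (a rank-`n` matrix in `𝕂^{n×m}`) has a dual
frame `Ψ` (i.e. `Ψ Φ* = I_n`) with at most `n²` non-vanishing entries. -/
theorem exists_sparse_dual {𝕂 : Type} [RCLike 𝕂] {n m : ℕ}
    (Φ : Matrix (Fin n) (Fin m) 𝕂) (hΦ : Φ.rank = n) :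
    ∃ Ψ : Matrix (Fin n) (Fin m) 𝕂, Ψ * Φᴴ = 1 ∧ l0Norm Ψ ≤ n ^ 2 := by
  obtain ⟨f, hA⟩ := Φ.exists_isUnit_submatrix_of_rank_eq_card (by rw [hΦ, Fintype.card_fin])
  refine ⟨(Φ.submatrix id f)ᴴ⁻¹ * (1 : Matrix (Fin m) (Fin m) 𝕂).submatrix f id, ?_, ?_⟩
  · rw [Matrix.mul_assoc, one_submatrix_id_mul, ← conjTranspose_submatrix]
    exact nonsing_inv_mul _ ((isUnit_iff_isUnit_det _).mp ((isUnit_conjTranspose _).mpr hA))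
  · rw [sq]
    exact l0Norm_le_of_apply_eq_zero_of_notMem_range f fun i _ hj =>
      mul_one_submatrix_apply_of_notMem_range _ f i hj
end

section
/- Let Φ be a frame for 𝕂^n with m vectors. Then every dual frame Ψ of Φ satisfies ‖Ψ‖₀ ≥ Σ_{j=1}^n spark(Φ^(j)), where Φ^(j) is the (n−1)×m matrix obtained from Φ by deleting the j-th row. -/
/-!
Row `j` of a dual frame `Ψ` is nonzero (since `(ΨΦ*)_jj = 1`), and its conjugate is annihilated
by every row of `Φ` except the `j`-th (since `(ΨΦ*)_ij = 0` for `i ≠ j`). Hence the columns of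
`Φ^(j)` indexed by the support of that row are linearly dependent, so the row has at least
`spark(Φ^(j))` nonzero entries; summing over the rows gives the bound.
-/

open Matrix

/-- The submatrix of `Φ` obtained by deleting the `j`-th row. -/
def deleteRow {𝕂 : Type} [RCLike 𝕂] {n m : ℕ}
    (Φ : Matrix (Fin n) (Fin m) 𝕂) (j : Fin n) :
    Matrix {i : Fin n // i ≠ j} (Fin m) 𝕂 :=
  fun i k => Φ i.1 k

/-- The spark of a matrix: the smallest number of linearly dependent columns;
if all columns are linearly independent it is set to `m + 1`. -/
noncomputable def spark {𝕂 : Type} [RCLike 𝕂] {l : Type} {m : ℕ}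
    (M : Matrix l (Fin m) 𝕂) : ℕ :=
  sInf (insert (m + 1)
    {c | ∃ S : Finset (Fin m), S.card = c ∧
      ¬ LinearIndependent 𝕂 (fun i : S => fun r => M r (i : Fin m))})

open Finset

theorem l0Norm_eq_sum_card_row_support {𝕂 : Type} [RCLike 𝕂] {n m : ℕ}
    (Ψ : Matrix (Fin n) (Fin m) 𝕂) :
    l0Norm Ψ = ∑ j, #{k | Ψ j k ≠ 0} := by
  classical
  rw [l0Norm, Set.ncard_eq_toFinset_card', Set.toFinset_ofPred]
  simp only [card_filter, Fintype.sum_prod_type]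

section Spark

variable {𝕂 : Type} [RCLike 𝕂] {l : Type} {m : ℕ}

theorem spark_le_card_of_not_linearIndependent (M : Matrix l (Fin m) 𝕂) (S : Finset (Fin m))
    (hS : ¬ LinearIndependent 𝕂 (fun i : S => fun r => M r i)) : spark M ≤ #S :=
  Nat.sInf_le (Or.inr ⟨S, rfl, hS⟩)

theorem spark_le_card_support_of_mulVec_eq_zero [Fintype l] (M : Matrix l (Fin m) 𝕂)
    {c : Fin m → 𝕂} (hc : c ≠ 0) (hMc : M *ᵥ c = 0) : spark M ≤ #{k | c k ≠ 0} := by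
  classical
  apply spark_le_card_of_not_linearIndependent
  obtain ⟨k, hk⟩ := Function.ne_iff.mp hc
  refine Fintype.not_linearIndependent_iff.mpr ⟨fun i => c i, ?_, ⟨k, by simpa using hk⟩, hk⟩
  funext r
  simp only [Finset.sum_apply, Pi.smul_apply, smul_eq_mul, Pi.zero_apply]
  rw [sum_coe_sort _ fun k => c k * M r k, sum_filter_of_ne (by simp +contextual)]
  simpa [mulVec, dotProduct, mul_comm] using congrFun hMc r

end Spark

theorem mulVec_star_row_of_mul_conjTranspose_eq_one {𝕂 : Type} [RCLike 𝕂] {n m : ℕ}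
    {Φ Ψ : Matrix (Fin n) (Fin m) 𝕂} (hΨ : Ψ * Φᴴ = 1) (j : Fin n) :
    Φ *ᵥ star (Ψ j) = Pi.single j 1 := by
  funext i
  have h := congrArg star (congrFun (congrFun hΨ j) i)
  simpa [mul_apply, mulVec, dotProduct, one_apply, Pi.single_apply, star_sum, mul_comm,
    eq_comm] using h

theorem dual_l0Norm_ge_sum_spark_general {𝕂 : Type} [RCLike 𝕂] {n m : ℕ}
    (Φ : Matrix (Fin n) (Fin m) 𝕂)
    (Ψ : Matrix (Fin n) (Fin m) 𝕂) (hΨ : Ψ * Φᴴ = 1) :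
    ∑ j : Fin n, spark (deleteRow Φ j) ≤ l0Norm Ψ := by
  rw [l0Norm_eq_sum_card_row_support]
  gcongr with j
  have hrow := mulVec_star_row_of_mul_conjTranspose_eq_one hΨ j
  have hne : star (Ψ j) ≠ 0 := fun h => by simpa [h] using congrFun hrow j
  have hdel : deleteRow Φ j *ᵥ star (Ψ j) = 0 := funext fun i =>
    (congrFun hrow i.1).trans (Pi.single_eq_of_ne i.2 _)
  simpa using spark_le_card_support_of_mulVec_eq_zero _ hne hdel

/-- Every dual frame `Ψ` of a frame `Φ` for `𝕂^n` satisfies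
`‖Ψ‖₀ ≥ ∑_{j=1}^n spark(Φ^(j))`. -/
theorem dual_l0Norm_ge_sum_spark {𝕂 : Type} [RCLike 𝕂] {n m : ℕ}
    (Φ : Matrix (Fin n) (Fin m) 𝕂) (hΦ : Φ.rank = n)
    (Ψ : Matrix (Fin n) (Fin m) 𝕂) (hΨ : Ψ * Φᴴ = 1) :
    ∑ j : Fin n, spark (deleteRow Φ j) ≤ l0Norm Ψ :=
  dual_l0Norm_ge_sum_spark_general Φ Ψ hΨ
end

section
/- Let Φ be a frame for 𝕂^n with m vectors. Then the minimum of ‖Ψ‖₀ over all dual frames Ψ of Φ equals Σ_{j=1}^n spark_j(Φ), where spark_j(Φ) is the smallest cardinality of a set S of column indices such that the columns of Φ^(j) indexed by S are linearly dependent while the columns of Φ indexed by S are linearly independent. -/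
/-!
Reading `Ψ Φ* = I` row by row, `Ψ` is a dual frame iff `x = conj (Ψ j)` solves `Φ x = e_j` for
every `j`, and these `n` problems are independent; so it suffices to show that the sparsest
solution of `Φ x = e_j` has exactly `spark_j(Φ)` nonzero entries. A sparsest solution has linearly
independent columns on its support `S` (a kernel vector supported in `S` would let us cancel one
more entry), while `Φ^(j) x = 0` with `x ≠ 0` makes the columns of `Φ^(j)` on `S` dependent, so
`S` competes in `spark_j(Φ)`. Conversely, if `S` competes, a kernel vector `d` of `Φ^(j)`
supported in `S` is not in the kernel of `Φ`, so `Φ d` is a nonzero multiple of `e_j`, and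
rescaling `d` gives a solution supported in `S`.
-/

open Matrix

/-- `spark_j(Φ)`: the smallest cardinality of a set `S` of column indices such that the
columns of `Φ^(j)` indexed by `S` are linearly dependent while the columns of `Φ`
indexed by `S` are linearly independent. -/
noncomputable def sparkJ {𝕂 : Type} [RCLike 𝕂] {n m : ℕ}
    (Φ : Matrix (Fin n) (Fin m) 𝕂) (j : Fin n) : ℕ :=
  sInf {c | ∃ S : Finset (Fin m), S.card = c ∧
    ¬ LinearIndependent 𝕂 (fun i : S => fun r => deleteRow Φ j r (i : Fin m)) ∧
    LinearIndependent 𝕂 (fun i : S => fun r => Φ r (i : Fin m))}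

open Function

theorem Function.support_star {α R : Type*} [AddMonoid R] [StarAddMonoid R] (v : α → R) :
    support (star v) = support v := by
  ext; simp

namespace Matrix

section Cols

variable {R ι κ : Type*} [Fintype κ]

theorem mulVec_eq_sum_cols_of_support_subset [CommSemiring R] (A : Matrix ι κ R) {x : κ → R}
    {S : Finset κ} (hx : support x ⊆ S) :
    A *ᵥ x = ∑ i : S, x i • fun r => A r i := by
  rw [Finset.sum_coe_sort S (fun i => x i • fun r => A r i),
    Finset.sum_subset S.subset_univ fun i _ hi => by
      rw [notMem_support.1 (mt (@hx i) hi), zero_smul]]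
  ext r
  simp [mulVec, dotProduct, mul_comm]

theorem linearIndependent_cols_iff [CommRing R] (A : Matrix ι κ R) (S : Finset κ) :
    LinearIndependent R (fun i : S => fun r => A r i) ↔
      ∀ x : κ → R, support x ⊆ S → A *ᵥ x = 0 → x = 0 := by
  rw [Fintype.linearIndependent_iff]
  refine ⟨fun h x hxS hAx => funext fun l => ?_, fun h g hg i => ?_⟩
  · by_contra hl
    exact hl (h (fun i => x i) (by rw [← A.mulVec_eq_sum_cols_of_support_subset hxS, hAx])
      ⟨l, hxS hl⟩)
  · have hext : support (extend Subtype.val g 0) ⊆ S := fun l hl => by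
      by_contra hlS
      exact hl (extend_apply' _ _ _ fun ⟨i, hi⟩ => hlS (hi ▸ i.2))
    have := h _ hext (by
      rw [A.mulVec_eq_sum_cols_of_support_subset hext, ← hg]
      simp only [Subtype.val_injective.extend_apply])
    simpa [Subtype.val_injective.extend_apply] using congr_fun this i

end Cols

section Field

variable {K ι κ : Type*} [Field K] [Fintype κ]

theorem mulVec_surjective_of_rank_eq_card [Fintype ι] {A : Matrix ι κ K}
    (h : A.rank = Fintype.card ι) : Surjective A.mulVec :=
  LinearMap.range_eq_top.1 <| Submodule.eq_top_of_finrank_eq (S := LinearMap.range A.mulVecLin) <|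
    by rwa [Module.finrank_fintype_fun_eq_card]

theorem exists_mulVec_eq_ncard_support_lt {A : Matrix ι κ K} {b : ι → K} {x d : κ → K}
    (hx : A *ᵥ x = b) (hd : d ≠ 0) (hdx : support d ⊆ support x) (hAd : A *ᵥ d = 0) :
    ∃ y, A *ᵥ y = b ∧ (support y).ncard < (support x).ncard := by
  obtain ⟨l, hl⟩ := Function.ne_iff.1 hd
  -- subtracting this multiple of `d` cancels the entry at `l`
  refine ⟨x - (x l / d l) • d, by rw [mulVec_sub, mulVec_smul, hAd, smul_zero, sub_zero, hx], ?_⟩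
  have hsub : support (x - (x l / d l) • d) ⊆ support x :=
    (support_sub _ _).trans (Set.union_subset le_rfl ((support_const_smul_subset _ _).trans hdx))
  refine Set.ncard_lt_ncard ((Set.ssubset_iff_of_subset hsub).2 ⟨l, hdx hl, ?_⟩)
  simp [div_mul_cancel₀ _ hl]

theorem linearIndependent_cols_of_ncard_support_le {A : Matrix ι κ K} {b : ι → K} {x : κ → K}
    (hx : A *ᵥ x = b) (hmin : ∀ y, A *ᵥ y = b → (support x).ncard ≤ (support y).ncard)
    {S : Finset κ} (hS : (S : Set κ) = support x) :
    LinearIndependent K (fun i : S => fun r => A r i) := by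
  refine (A.linearIndependent_cols_iff S).2 fun d hdS hAd => ?_
  by_contra hd
  obtain ⟨y, hy, hlt⟩ := exists_mulVec_eq_ncard_support_lt hx hd (hS ▸ hdS) hAd
  exact (hmin y hy).not_gt hlt

end Field

theorem mul_conjTranspose_eq_one_iff {R ι κ : Type*} [Semiring R] [StarRing R] [Fintype ι]
    [Fintype κ] [DecidableEq ι] {Ψ Φ : Matrix ι κ R} :
    Ψ * Φᴴ = 1 ↔ ∀ j, Φ *ᵥ star (Ψ j) = Pi.single j 1 := by
  rw [← conjTranspose_inj, conjTranspose_mul, conjTranspose_conjTranspose, conjTranspose_one]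
  refine ⟨fun h j => ?_, fun h => ext_of_mulVec_single fun j => ?_⟩
  · have hj : (Φ * Ψᴴ) *ᵥ Pi.single j 1 = 1 *ᵥ Pi.single j 1 := by rw [h]
    rwa [← mulVec_mulVec, mulVec_single_one, one_mulVec] at hj
  · rw [← mulVec_mulVec, mulVec_single_one, one_mulVec]
    exact h j

end Matrix

theorem l0Norm_eq_sum_ncard_support {𝕂 : Type} [RCLike 𝕂] {n m : ℕ}
    (Ψ : Matrix (Fin n) (Fin m) 𝕂) :
    l0Norm Ψ = ∑ j, (support (Ψ j)).ncard := by
  classical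
  simp only [l0Norm, support, Set.ncard_eq_toFinset_card', Set.toFinset_ofPred,
    Finset.card_filter, Fintype.sum_prod_type]

section Spark

variable {𝕂 : Type} [RCLike 𝕂] {n m : ℕ}

def IsSparkSet (Φ : Matrix (Fin n) (Fin m) 𝕂) (j : Fin n) (S : Finset (Fin m)) : Prop :=
  ¬ LinearIndependent 𝕂 (fun i : S => fun r => deleteRow Φ j r (i : Fin m)) ∧
    LinearIndependent 𝕂 (fun i : S => fun r => Φ r (i : Fin m))

variable {Φ : Matrix (Fin n) (Fin m) 𝕂} {j : Fin n}

theorem sparkJ_le_card {S : Finset (Fin m)} (hS : IsSparkSet Φ j S) : sparkJ Φ j ≤ S.card :=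
  Nat.sInf_le ⟨S, rfl, hS⟩

theorem exists_isSparkSet_card_eq_sparkJ {S : Finset (Fin m)} (hS : IsSparkSet Φ j S) :
    ∃ T, IsSparkSet Φ j T ∧ T.card = sparkJ Φ j := by
  obtain ⟨T, hT, hTspark⟩ := Nat.sInf_mem (⟨S.card, S, rfl, hS⟩ :
    {c | ∃ T : Finset (Fin m), T.card = c ∧ IsSparkSet Φ j T}.Nonempty)
  exact ⟨T, hTspark, hT⟩

theorem mulVec_eq_single_of_deleteRow_mulVec_eq_zero {x : Fin m → 𝕂}
    (hx : deleteRow Φ j *ᵥ x = 0) : Φ *ᵥ x = Pi.single j ((Φ *ᵥ x) j) := by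
  funext r
  by_cases hr : r = j
  · subst hr
    rw [Pi.single_eq_same]
  · rw [Pi.single_eq_of_ne hr]
    exact congr_fun hx ⟨r, hr⟩

theorem isSparkSet_of_mulVec_eq_single {x : Fin m → 𝕂} (hx : Φ *ᵥ x = Pi.single j 1)
    {S : Finset (Fin m)} (hS : (S : Set (Fin m)) = support x)
    (hind : LinearIndependent 𝕂 (fun i : S => fun r => Φ r (i : Fin m))) :
    IsSparkSet Φ j S := by
  refine ⟨fun hdel => ?_, hind⟩
  have hdel0 : deleteRow Φ j *ᵥ x = 0 := funext fun r => by
    change (Φ *ᵥ x) r = 0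
    rw [hx, Pi.single_eq_of_ne r.2]
  have hx0 := ((deleteRow Φ j).linearIndependent_cols_iff S).1 hdel x hS.ge hdel0
  simpa [hx0] using congr_fun hx j

theorem IsSparkSet.exists_mulVec_eq_single {S : Finset (Fin m)} (hS : IsSparkSet Φ j S) :
    ∃ x, Φ *ᵥ x = Pi.single j 1 ∧ support x ⊆ S := by
  obtain ⟨hdep, hind⟩ := hS
  rw [Matrix.linearIndependent_cols_iff] at hdep hind
  push Not at hdep
  obtain ⟨d, hdS, hdel, hd⟩ := hdep
  have hΦd := mulVec_eq_single_of_deleteRow_mulVec_eq_zero hdel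
  have hc : (Φ *ᵥ d) j ≠ 0 := fun hc => hd (hind d hdS (by rw [hΦd, hc, Pi.single_zero]))
  refine ⟨((Φ *ᵥ d) j)⁻¹ • d, ?_, (support_const_smul_subset _ _).trans hdS⟩
  generalize (Φ *ᵥ d) j = c at hc hΦd
  rw [Matrix.mulVec_smul, hΦd, ← Pi.single_smul, smul_eq_mul, inv_mul_cancel₀ hc]

theorem isLeast_ncard_support_mulVec_eq_single (hΦ : Φ.rank = n) (j : Fin n) :
    IsLeast {c | ∃ x, Φ *ᵥ x = Pi.single j 1 ∧ (support x).ncard = c} (sparkJ Φ j) := by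
  set sols := {x | Φ *ᵥ x = Pi.single j 1}
  have hsols : sols.Nonempty :=
    Matrix.mulVec_surjective_of_rank_eq_card (by rwa [Fintype.card_fin]) _
  set x₀ := argminOn (fun x => (support x).ncard) sols hsols
  have hx₀ : x₀ ∈ sols := argminOn_mem _ _ hsols
  have hmin : ∀ y ∈ sols, (support x₀).ncard ≤ (support y).ncard :=
    fun y hy => argminOn_le (fun x => (support x).ncard) sols hy
  set S₀ := (Set.toFinite (support x₀)).toFinset
  have hS₀ : (S₀ : Set (Fin m)) = support x₀ := Set.Finite.coe_toFinset _
  have hS₀spark : IsSparkSet Φ j S₀ := isSparkSet_of_mulVec_eq_single hx₀ hS₀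
    (Matrix.linearIndependent_cols_of_ncard_support_le hx₀ hmin hS₀)
  have hspark_le : ∀ y ∈ sols, sparkJ Φ j ≤ (support y).ncard := fun y hy => calc
    sparkJ Φ j ≤ S₀.card := sparkJ_le_card hS₀spark
    _ = (support x₀).ncard := by rw [← hS₀, Set.ncard_coe_finset]
    _ ≤ (support y).ncard := hmin y hy
  obtain ⟨T, hT, hTcard⟩ := exists_isSparkSet_card_eq_sparkJ hS₀spark
  obtain ⟨x, hx, hxT⟩ := hT.exists_mulVec_eq_single
  refine ⟨⟨x, hx, le_antisymm ?_ (hspark_le x hx)⟩, ?_⟩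
  · rw [← hTcard, ← Set.ncard_coe_finset]
    exact Set.ncard_le_ncard hxT
  · rintro _ ⟨y, hy, rfl⟩
    exact hspark_le y hy

end Spark

/-- The minimum of `‖Ψ‖₀` over all dual frames `Ψ` of a frame `Φ`
for `𝕂^n` equals `∑_{j=1}^n spark_j(Φ)`. -/
theorem isLeast_l0Norm_dual {𝕂 : Type} [RCLike 𝕂] {n m : ℕ}
    (Φ : Matrix (Fin n) (Fin m) 𝕂) (hΦ : Φ.rank = n) :
    IsLeast {c | ∃ Ψ : Matrix (Fin n) (Fin m) 𝕂, Ψ * Φᴴ = 1 ∧ l0Norm Ψ = c}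
      (∑ j : Fin n, sparkJ Φ j) := by
  have hrow := isLeast_ncard_support_mulVec_eq_single hΦ
  constructor
  · choose x hx hcard using fun j => (hrow j).1
    set Ψ : Matrix (Fin n) (Fin m) 𝕂 := Matrix.of fun j => star (x j)
    have hΨ (j : Fin n) : Ψ j = star (x j) := rfl
    refine ⟨Ψ, Matrix.mul_conjTranspose_eq_one_iff.2 fun j => ?_, ?_⟩
    · rw [hΨ, star_star, hx]
    · simp only [l0Norm_eq_sum_ncard_support, hΨ, support_star, hcard]
  · rintro _ ⟨Ψ, hΨ, rfl⟩
    rw [l0Norm_eq_sum_ncard_support]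
    refine Finset.sum_le_sum fun j _ => (hrow j).2 ?_
    exact ⟨star (Ψ j), Matrix.mul_conjTranspose_eq_one_iff.1 hΨ j,
      congrArg Set.ncard (support_star _)⟩
end

section
/- Let n ∈ ℕ and let m ≥ n be prime. Let Φ ∈ ℂ^{n×m} be the partial Fourier matrix with entries Φ_{j,k} = exp(2πi·jk/m) for j = 1,…,n and k = 1,…,m. Then every dual frame Ψ of Φ satisfies ‖Ψ‖₀ ≥ n², and the sparsest dual frame of Φ satisfies ‖Ψ‖₀ = n². -/
open Matrix

/-!
The key input is Chebotarev's theorem: if `ζ` is a primitive `p`-th root of unity and `a`, `b`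
are injective modulo `p`, then `det (ζ ^ (b j * a k)) ≠ 0`. If column `k` of `C v` holds the
coefficients of `X ^ a k` modulo `∏ j, (X - v j)`, then `(v j ^ a k) = vandermonde v * C v`,
naturally in the ring of `v`.
With `v j = T ^ b j` in `ℤ[T]`, a vanishing determinant makes `det (C v)` vanish at `ζ`, so the
cyclotomic polynomial divides it and `p ∣ det (C 1)`. With `v j = T ^ j`, cancelling `T - 1` from
every Vandermonde factor and evaluating at `T = 1` gives
`∏ (a j - a i) = ∏ (j - i) * det (C 1)`, so `p` divides some `a j - a i`.

Hence every square submatrix of the partial Fourier matrix is invertible. A row of a dual frame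
with fewer than `n` non-zero entries would be a non-zero kernel vector of such a submatrix built
from the `n - 1` equations it satisfies with zero right-hand side; conversely, inverting the first
`n` columns gives a dual frame with `n` entries in each row.
-/

open Polynomial Finset Function

section NodalRemainder

variable {R S : Type*} [CommRing R] [CommRing S] {s : ℕ}

noncomputable def nodalRemainderMatrix (v : Fin s → R) (a : Fin s → ℕ) :
    Matrix (Fin s) (Fin s) R :=
  of fun i k => (X ^ a k %ₘ Lagrange.nodal univ v).coeff i

theorem of_pow_eq_vandermonde_mul_nodalRemainderMatrix [Nontrivial R] (v : Fin s → R)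
    (a : Fin s → ℕ) :
    of (fun j k => v j ^ a k) = vandermonde v * nodalRemainderMatrix v a := by
  ext j k
  have hs : Lagrange.nodal univ v ≠ 1 := by
    intro h
    have := congrArg natDegree h
    rw [Lagrange.natDegree_nodal, natDegree_one, card_univ, Fintype.card_fin] at this
    exact (Fin.pos j).ne' this
  have hdeg := natDegree_modByMonic_lt (X ^ a k) Lagrange.nodal_monic hs
  rw [Lagrange.natDegree_nodal, card_univ, Fintype.card_fin] at hdeg
  calc v j ^ a k = (X ^ a k %ₘ Lagrange.nodal univ v).eval (v j) := by
        rw [modByMonic_eq_sub_mul_div, eval_sub, eval_mul,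
          Lagrange.eval_nodal_at_node (mem_univ j), zero_mul, sub_zero, eval_pow, eval_X]
    _ = _ := by
        rw [eval_eq_sum_range' hdeg, ← Fin.sum_univ_eq_sum_range, mul_apply]
        simp only [vandermonde_apply, nodalRemainderMatrix, of_apply, mul_comm]

theorem map_det_nodalRemainderMatrix (f : R →+* S) (v : Fin s → R) (a : Fin s → ℕ) :
    f (nodalRemainderMatrix v a).det = (nodalRemainderMatrix (f ∘ v) a).det := by
  rw [RingHom.map_det]
  congr 1
  ext i k
  have hnodal : (Lagrange.nodal univ v).map f = Lagrange.nodal univ (f ∘ v) := by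
    simp [Lagrange.nodal_eq, Polynomial.map_prod]
  simp only [RingHom.mapMatrix_apply, map_apply, nodalRemainderMatrix, of_apply, ← coeff_map,
    map_modByMonic f Lagrange.nodal_monic, hnodal, Polynomial.map_pow, map_X]

end NodalRemainder

theorem eval_one_X_pow_sub_X_pow_divByMonic {R : Type*} [CommRing R] (x y : ℕ) :
    (((X : R[X]) ^ x - X ^ y) /ₘ (X - C 1)).eval 1 = (x : R) - y := by
  have h := congrArg (fun q => (derivative q).eval 1)
    ((mul_divByMonic_eq_iff_isRoot (a := (1 : R)) (p := (X : R[X]) ^ x - X ^ y)).mpr (by simp))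
  simpa [derivative_X_pow] using h

theorem prod_X_pow_sub_X_pow_eq_pow_mul {R : Type*} [CommRing R] {s : ℕ} (e : Fin s → ℕ) :
    ∏ i, ∏ j ∈ Ioi i, ((X : R[X]) ^ e j - X ^ e i) =
      (X - C 1) ^ (∑ i : Fin s, #(Ioi i)) *
        ∏ i, ∏ j ∈ Ioi i, ((X ^ e j - X ^ e i) /ₘ (X - C 1)) := by
  simp_rw [← prod_pow_eq_pow_sum, ← prod_const, ← prod_mul_distrib]
  refine prod_congr rfl fun i _ => prod_congr rfl fun j _ => ?_
  exact (mul_divByMonic_eq_iff_isRoot.mpr (by simp)).symm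

theorem eval_one_det_nodalRemainderMatrix_X_pow {R : Type*} [CommRing R] {s : ℕ}
    (e a : Fin s → ℕ) :
    (nodalRemainderMatrix (fun j => (X : R[X]) ^ e j) a).det.eval 1 =
      (nodalRemainderMatrix (fun _ => (1 : R)) a).det := by
  rw [← coe_evalRingHom, map_det_nodalRemainderMatrix]
  congr 2
  ext j
  simp

theorem prod_sub_eq_mul_det_nodalRemainderMatrix_one {s : ℕ} (a : Fin s → ℕ) :
    ∏ i, ∏ j ∈ Ioi i, ((a j : ℤ) - a i) =
      (∏ i : Fin s, ∏ j ∈ Ioi i, ((j : ℤ) - i)) *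
        (nodalRemainderMatrix (fun _ => (1 : ℤ)) a).det := by
  have hfac := congrArg det
    (of_pow_eq_vandermonde_mul_nodalRemainderMatrix (fun j : Fin s => (X : ℤ[X]) ^ (j : ℕ)) a)
  have hlhs : of (fun j k : Fin s => ((X : ℤ[X]) ^ (j : ℕ)) ^ a k) =
      (vandermonde fun k => X ^ a k)ᵀ := by
    ext j k
    simp only [of_apply, transpose_apply, vandermonde_apply, ← pow_mul, mul_comm]
  rw [det_mul, hlhs, det_transpose, det_vandermonde, det_vandermonde,
    prod_X_pow_sub_X_pow_eq_pow_mul, prod_X_pow_sub_X_pow_eq_pow_mul, mul_assoc] at hfac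
  have hval := congrArg (Polynomial.eval 1)
    (mul_left_cancel₀ (pow_ne_zero _ (X_sub_C_ne_zero 1)) hfac)
  simpa only [eval_mul, eval_prod, eval_one_X_pow_sub_X_pow_divByMonic,
    eval_one_det_nodalRemainderMatrix_X_pow] using hval

theorem IsPrimitiveRoot.injective_pow {M : Type*} [CommMonoid M] {ζ : M} {p : ℕ} [NeZero p]
    (hζ : IsPrimitiveRoot ζ p) {ι : Type*} {b : ι → ℕ}
    (hb : Injective fun j => (b j : ZMod p)) : Injective fun j => ζ ^ b j := by
  intro i j (h : ζ ^ b i = ζ ^ b j)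
  refine hb ((ZMod.natCast_eq_natCast_iff' _ _ _).mpr ?_)
  rw [← pow_mod_orderOf, ← pow_mod_orderOf (n := b j), ← hζ.eq_orderOf] at h
  exact hζ.pow_inj (Nat.mod_lt _ (NeZero.pos p)) (Nat.mod_lt _ (NeZero.pos p)) h

theorem IsPrimitiveRoot.natCast_dvd_det_nodalRemainderMatrix_one {K : Type*} [Field K]
    [CharZero K] {p : ℕ} [hp : Fact p.Prime] {ζ : K} (hζ : IsPrimitiveRoot ζ p) {s : ℕ}
    {a b : Fin s → ℕ} (hb : Injective fun j => ζ ^ b j)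
    (hdet : (of fun j k => ζ ^ (b j * a k)).det = 0) :
    (p : ℤ) ∣ (nodalRemainderMatrix (fun _ => (1 : ℤ)) a).det := by
  set q := (nodalRemainderMatrix (fun j => (X : ℤ[X]) ^ b j) a).det
  have hroot : aeval ζ q = 0 := by
    have hfac := congrArg det
      (of_pow_eq_vandermonde_mul_nodalRemainderMatrix (fun j => ζ ^ b j) a)
    simp_rw [← pow_mul, hdet, det_mul] at hfac
    have hζb : ((aeval ζ : ℤ[X] →ₐ[ℤ] K).toRingHom ∘ fun j => X ^ b j) =
        fun j => ζ ^ b j := by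
      ext j
      simp
    have hq : aeval ζ q = (nodalRemainderMatrix (fun j => ζ ^ b j) a).det := by
      rw [← hζb, ← map_det_nodalRemainderMatrix]
      rfl
    rw [hq]
    exact (mul_eq_zero.mp hfac.symm).resolve_left (det_vandermonde_ne_zero_iff.mpr hb)
  obtain ⟨g, hg⟩ := cyclotomic_eq_minpoly hζ hp.out.pos ▸
    minpoly.isIntegrallyClosed_dvd (hζ.isIntegral hp.out.pos) hroot
  have hval := congrArg (Polynomial.eval 1) hg
  rw [eval_mul, eval_one_cyclotomic_prime, eval_one_det_nodalRemainderMatrix_X_pow] at hval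
  exact ⟨_, hval⟩

theorem IsPrimitiveRoot.det_pow_mul_ne_zero {K : Type*} [Field K] [CharZero K] {p : ℕ}
    [hp : Fact p.Prime] {ζ : K} (hζ : IsPrimitiveRoot ζ p) {s : ℕ} {a b : Fin s → ℕ}
    (ha : Injective fun k => (a k : ZMod p)) (hb : Injective fun j => (b j : ZMod p)) :
    (of fun j k => ζ ^ (b j * a k)).det ≠ 0 := by
  intro hdet
  have hpZ : Prime (p : ℤ) := Nat.prime_iff_prime_int.mp hp.out
  have hpq := hζ.natCast_dvd_det_nodalRemainderMatrix_one (hζ.injective_pow hb) hdet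
  obtain ⟨i, -, hi⟩ := (hpZ.dvd_finsetProd_iff _).mp <|
    (prod_sub_eq_mul_det_nodalRemainderMatrix_one a).symm ▸ dvd_mul_of_dvd_right hpq _
  obtain ⟨j, hj, hij⟩ := (hpZ.dvd_finsetProd_iff _).mp hi
  have haij : (a j : ZMod p) = a i := by
    rw [← sub_eq_zero]
    exact_mod_cast (ZMod.intCast_zmod_eq_zero_iff_dvd _ p).mpr hij
  exact (mem_Ioi.mp hj).ne' (ha haij)

theorem IsPrimitiveRoot.card_lt_card_support_of_sum_mul_pow_eq_zero {K : Type*} [Field K]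
    [CharZero K] [DecidableEq K] {p : ℕ} [Fact p.Prime] {ζ : K} (hζ : IsPrimitiveRoot ζ p)
    {ι κ : Type*} [Fintype ι] {a : ι → ℕ} {b : κ → ℕ}
    (ha : Injective fun k => (a k : ZMod p)) {J : Finset κ}
    (hb : Set.InjOn (fun j => (b j : ZMod p)) J) {u : ι → K} (hu : u ≠ 0)
    (hJ : ∀ j ∈ J, ∑ k, u k * ζ ^ (b j * a k) = 0) :
    #J < #{k | u k ≠ 0} := by
  by_contra! hle
  set T : Finset ι := {k | u k ≠ 0}
  obtain ⟨J', hJ', hcard⟩ := exists_subset_card_eq hle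
  let eT : Fin #T ≃ T := (Fintype.equivFinOfCardEq (Fintype.card_coe T)).symm
  let eJ : Fin #T ≃ J' := (Fintype.equivFinOfCardEq ((Fintype.card_coe J').trans hcard)).symm
  have hdet := hζ.det_pow_mul_ne_zero (a := fun c => a (eT c)) (b := fun r => b (eJ r))
    (ha.comp (Subtype.val_injective.comp eT.injective))
    (fun r r' h => eJ.injective (Subtype.ext (hb (hJ' (eJ r).2) (hJ' (eJ r').2) h)))
  have hker : (of fun r c => ζ ^ (b (eJ r) * a (eT c))) *ᵥ (fun c => u (eT c)) = 0 := by
    ext r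
    calc ∑ c, ζ ^ (b (eJ r) * a (eT c)) * u (eT c)
        = ∑ k : T, ζ ^ (b (eJ r) * a k) * u k :=
          eT.sum_comp fun k : T => ζ ^ (b (eJ r) * a k) * u k
      _ = ∑ k ∈ T, u k * ζ ^ (b (eJ r) * a k) := by
        rw [sum_coe_sort T fun k => ζ ^ (b (eJ r) * a k) * u k]
        simp_rw [mul_comm]
      _ = 0 := by
        rw [sum_filter_of_ne fun k _ hk => left_ne_zero_of_mul hk]
        exact hJ _ (hJ' (eJ r).2)
  obtain ⟨k, hk : u k ≠ 0⟩ := Function.ne_iff.mp hu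
  have hzero := congrFun (eq_zero_of_mulVec_eq_zero hdet hker) (eT.symm ⟨k, by simpa [T]⟩)
  simp only [Equiv.apply_symm_apply, Pi.zero_apply] at hzero
  exact hk hzero

theorem injective_natCast_val_add_one {n m : ℕ} (h : n ≤ m) :
    Injective fun j : Fin n => (((j : ℕ) + 1 : ℕ) : ZMod m) := by
  intro i j hij
  simp only [Nat.cast_add, Nat.cast_one, add_left_inj, ZMod.natCast_eq_natCast_iff'] at hij
  rwa [Nat.mod_eq_of_lt (i.2.trans_le h), Nat.mod_eq_of_lt (j.2.trans_le h), ← Fin.ext_iff] at hij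

def partialFourier {K : Type*} [Monoid K] (ξ : K) (n m : ℕ) : Matrix (Fin n) (Fin m) K :=
  of fun j k => ξ ^ (((j : ℕ) + 1) * ((k : ℕ) + 1))

section PartialFourier

variable {K : Type*} [Field K] [CharZero K] {n m : ℕ} [Fact m.Prime] {ξ : K}

theorem le_card_support_of_mul_partialFourier_transpose_eq_one [DecidableEq K] (hnm : n ≤ m)
    (hξ : IsPrimitiveRoot ξ m) {Ψ : Matrix (Fin n) (Fin m) K}
    (hΨ : Ψ * (partialFourier ξ n m)ᵀ = 1) (i : Fin n) : n ≤ #{k | Ψ i k ≠ 0} := by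
  have hrow (j : Fin n) :
      ∑ k, Ψ i k * ξ ^ (((j : ℕ) + 1) * ((k : ℕ) + 1)) = if i = j then 1 else 0 := by
    rw [← one_apply, ← hΨ, mul_apply]
    rfl
  have hu : Ψ i ≠ 0 := fun h => by simpa [h] using hrow i
  have hlt := hξ.card_lt_card_support_of_sum_mul_pow_eq_zero
    (injective_natCast_val_add_one le_rfl) (injective_natCast_val_add_one hnm).injOn hu
    (J := univ.erase i) fun j hj => by rw [hrow, if_neg (ne_of_mem_erase hj).symm]
  rw [card_erase_of_mem (mem_univ i), card_univ, Fintype.card_fin] at hlt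
  omega

theorem isUnit_det_partialFourier_castLE (hnm : n ≤ m) (hξ : IsPrimitiveRoot ξ m) :
    IsUnit ((partialFourier ξ n m)ᵀ.submatrix (Fin.castLE hnm) id).det := by
  rw [← det_transpose, isUnit_iff_ne_zero]
  exact hξ.det_pow_mul_ne_zero (a := fun k : Fin n => (k : ℕ) + 1) (b := fun j => (j : ℕ) + 1)
    (injective_natCast_val_add_one hnm) (injective_natCast_val_add_one hnm)

end PartialFourier

theorem exists_mul_eq_one_of_isUnit_det_submatrix {R : Type*} [CommRing R] {ι κ : Type*}
    [Fintype ι] [DecidableEq ι] [Fintype κ] [DecidableEq κ] {B : Matrix κ ι R} {e : ι → κ}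
    (hB : IsUnit (B.submatrix e id).det) :
    ∃ Ψ : Matrix ι κ R, Ψ * B = 1 ∧ ∀ i k, Ψ i k ≠ 0 → k ∈ Set.range e := by
  refine ⟨(B.submatrix e id)⁻¹ * (1 : Matrix κ κ R).submatrix e (Equiv.refl κ), ?_, ?_⟩
  · rw [Matrix.mul_assoc, one_submatrix_mul]
    exact nonsing_inv_mul _ hB
  · intro i k hik
    by_contra hk
    refine hik (sum_eq_zero fun j _ => ?_)
    change _ * (1 : Matrix κ κ R) (e j) k = 0
    rw [one_apply_ne fun h => hk ⟨j, h⟩, mul_zero]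

theorem l0Norm_eq_sum_card {𝕂 : Type} [RCLike 𝕂] [DecidableEq 𝕂] {n m : ℕ}
    (Ψ : Matrix (Fin n) (Fin m) 𝕂) : l0Norm Ψ = ∑ i, #{k | Ψ i k ≠ 0} := by
  rw [l0Norm, Set.ncard_eq_toFinset_card', Set.toFinset_ofPred, card_filter, Fintype.sum_prod_type]
  simp only [card_filter]

theorem l0Norm_le_mul_of_ne_zero_mem_range {𝕂 : Type} [RCLike 𝕂] {n m r : ℕ}
    {Ψ : Matrix (Fin n) (Fin m) 𝕂} {e : Fin r → Fin m}
    (hΨ : ∀ i k, Ψ i k ≠ 0 → k ∈ Set.range e) : l0Norm Ψ ≤ n * r := by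
  classical
  rw [l0Norm_eq_sum_card]
  calc ∑ i, #{k | Ψ i k ≠ 0} ≤ ∑ _i : Fin n, #(univ.image e) := by
        refine sum_le_sum fun i _ => card_le_card fun k hk => ?_
        obtain ⟨j, rfl⟩ := hΨ i k (mem_filter.mp hk).2
        exact mem_image_of_mem e (mem_univ j)
    _ ≤ n * r := by
        rw [sum_const, card_univ, Fintype.card_fin, smul_eq_mul]
        exact Nat.mul_le_mul_left n (card_image_le.trans_eq (by simp))

/-- Let `m ≥ n` be prime and let `Φ ∈ ℂ^{n×m}` be the partial Fourier
matrix with entries `Φ_{j,k} = exp(2πi·jk/m)` for `j = 1,…,n`, `k = 1,…,m`. Then every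
dual frame `Ψ` of `Φ` satisfies `‖Ψ‖₀ ≥ n²`, and the sparsest dual satisfies
`‖Ψ‖₀ = n²`. -/
theorem partial_fourier_sparsest_dual {n m : ℕ} (hm : Nat.Prime m) (hnm : n ≤ m)
    (Φ : Matrix (Fin n) (Fin m) ℂ)
    (hΦ : ∀ (j : Fin n) (k : Fin m),
      Φ j k = Complex.exp (2 * Real.pi * Complex.I *
        (((j : ℕ) + 1) * ((k : ℕ) + 1)) / m)) :
    (∀ Ψ : Matrix (Fin n) (Fin m) ℂ, Ψ * Φᴴ = 1 → n ^ 2 ≤ l0Norm Ψ) ∧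
    IsLeast {c | ∃ Ψ : Matrix (Fin n) (Fin m) ℂ, Ψ * Φᴴ = 1 ∧ l0Norm Ψ = c}
      (n ^ 2) := by
  have : Fact m.Prime := ⟨hm⟩
  set ζ : ℂ := Complex.exp (2 * Real.pi * Complex.I / m)
  have hζ : IsPrimitiveRoot ζ m := Complex.isPrimitiveRoot_exp m hm.ne_zero
  have hξ : IsPrimitiveRoot (star ζ) m := hζ.map_of_injective (starRingEnd ℂ).injective
  have hΦζ : Φᴴ = (partialFourier (star ζ) n m)ᵀ := by
    ext k j
    rw [conjTranspose_apply, transpose_apply, partialFourier, of_apply, ← star_pow, hΦ,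
      ← Complex.exp_nat_mul]
    push_cast
    ring_nf
  have hlower (Ψ : Matrix (Fin n) (Fin m) ℂ) (hΨ : Ψ * Φᴴ = 1) : n ^ 2 ≤ l0Norm Ψ := by
    rw [l0Norm_eq_sum_card]
    calc n ^ 2 = ∑ _i : Fin n, n := by simp [sq]
      _ ≤ _ := sum_le_sum fun i _ =>
        le_card_support_of_mul_partialFourier_transpose_eq_one hnm hξ (hΦζ ▸ hΨ) i
  obtain ⟨Ψ, hΨ, hsupp⟩ :=
    exists_mul_eq_one_of_isUnit_det_submatrix (isUnit_det_partialFourier_castLE hnm hξ)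
  rw [← hΦζ] at hΨ
  have hupper : l0Norm Ψ ≤ n ^ 2 := sq n ▸ l0Norm_le_mul_of_ne_zero_mem_range hsupp
  exact ⟨hlower, ⟨Ψ, hΨ, le_antisymm hupper (hlower Ψ hΨ)⟩,
    fun c ⟨Ψ, hΨ, hc⟩ => hc ▸ hlower Ψ hΨ⟩
end

section
/- Let m ≥ n ≥ 1 and let P(n,m) ⊂ 𝕂^{n×m} be the set of all matrices Φ such that spark(Φ^(j)) = n for every j = 1,…,n (equivalently, each Φ^(j) is in general position). Then P(n,m) is open and dense in 𝕂^{n×m}; in particular, its complement is closed and nowhere dense. -/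
open Matrix

/-!
Deleting a row is a continuous open map, so it suffices that the `(n-1) × m` matrices in general
position form an open dense set; for `n - 1 < m` general position is exactly `spark = n`.
General position is a finite intersection of conditions "the columns in `S` are independent",
each open because linear independence is an open condition. Each is also dense: if `E` is the
identity on the columns `S` and zero elsewhere, the `S`-minor of `M - t • E` is `A - t • 1`,
singular only at the finitely many eigenvalues of `A`.
-/

open Set

theorem dense_iInter_of_isOpen_of_finite {X : Type*} [TopologicalSpace X] {ι : Sort*} [Finite ι]
    {f : ι → Set X} (ho : ∀ i, IsOpen (f i)) (hd : ∀ i, Dense (f i)) : Dense (⋂ i, f i) :=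
  sInter_range f ▸ (finite_range f).dense_sInter (forall_mem_range.2 ho) (forall_mem_range.2 hd)

theorem Continuous.mem_closure_of_finite_setOf_notMem {𝕂 X : Type*}
    [NontriviallyNormedField 𝕂] [TopologicalSpace X] {γ : 𝕂 → X} (hγ : Continuous γ) {s : Set X}
    (hs : {t | γ t ∉ s}.Finite) (t₀ : 𝕂) : γ t₀ ∈ closure s := by
  have hdense : Dense (γ ⁻¹' s) := by
    convert dense_univ.sdiff_finset hs.toFinset using 1
    ext t
    simp
  exact map_mem_closure hγ (hdense t₀) (mapsTo_preimage γ s)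

namespace Matrix

variable {𝕂 l ι : Type*}

theorem finite_setOf_not_isUnit_sub_smul_one [Field 𝕂] [Fintype l] [DecidableEq l]
    (A : Matrix l l 𝕂) : {t : 𝕂 | ¬IsUnit (A - t • 1)}.Finite := by
  refine A.finite_spectrum.subset fun t ht => spectrum.mem_iff.2 fun hunit => ht ?_
  simpa [Algebra.algebraMap_eq_smul_one] using hunit.neg

theorem linearIndepOn_transpose_iff_isUnit_submatrix [Field 𝕂] [Fintype l] [DecidableEq l]
    (M : Matrix l ι 𝕂) {s : Set ι} (e : l ≃ s) :
    LinearIndepOn 𝕂 Mᵀ s ↔ IsUnit (M.submatrix id (fun r => (e r : ι))) := by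
  unfold LinearIndepOn
  rw [← linearIndependent_equiv e, ← linearIndependent_cols_iff_isUnit]
  rfl

theorem dense_setOf_isUnit_submatrix [NontriviallyNormedField 𝕂] [Fintype l] [DecidableEq l]
    [DecidableEq ι] {g : l → ι} (hg : g.Injective) :
    Dense {M : Matrix l ι 𝕂 | IsUnit (M.submatrix id g)} := by
  let E : Matrix l ι 𝕂 := of fun r k => if g r = k then 1 else 0
  have hE : E.submatrix id g = 1 := by
    ext r r'
    simp [E, one_apply, hg.eq_iff]
  intro M
  have hγ : Continuous fun t : 𝕂 => M - t • E := by fun_prop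
  have hsingular : {t : 𝕂 | M - t • E ∉ {M | IsUnit (M.submatrix id g)}}.Finite := by
    simpa [submatrix_sub, submatrix_smul, hE] using
      (M.submatrix id g).finite_setOf_not_isUnit_sub_smul_one
  simpa using hγ.mem_closure_of_finite_setOf_notMem hsingular 0

def InGeneralPosition [Field 𝕂] [Fintype l] (M : Matrix l ι 𝕂) : Prop :=
  ∀ S : Finset ι, S.card = Fintype.card l → LinearIndepOn 𝕂 Mᵀ (S : Set ι)

theorem InGeneralPosition.linearIndepOn_of_card_le [Field 𝕂] [Fintype l] [Fintype ι]
    {M : Matrix l ι 𝕂} (hM : M.InGeneralPosition) (hl : Fintype.card l ≤ Fintype.card ι)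
    {S : Finset ι} (hS : S.card ≤ Fintype.card l) : LinearIndepOn 𝕂 Mᵀ (S : Set ι) := by
  obtain ⟨T, hST, hT⟩ := Finset.exists_superset_card_eq hS (by simpa using hl)
  exact (hM T hT).mono (Finset.coe_subset.2 hST)

section GeneralPosition

variable [NontriviallyNormedField 𝕂] [Fintype l]

theorem isOpen_setOf_linearIndepOn_transpose [CompleteSpace 𝕂] (s : Set ι) [Finite s] :
    IsOpen {M : Matrix l ι 𝕂 | LinearIndepOn 𝕂 Mᵀ s} := by
  have hcont : Continuous fun (M : Matrix l ι 𝕂) (k : s) => Mᵀ k := by fun_prop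
  exact isOpen_setOfPred_linearIndependent.preimage hcont

theorem dense_setOf_linearIndepOn_transpose {S : Finset ι} (hS : S.card = Fintype.card l) :
    Dense {M : Matrix l ι 𝕂 | LinearIndepOn 𝕂 Mᵀ (S : Set ι)} := by
  classical
  let e : l ≃ (S : Set ι) := Fintype.equivOfCardEq (by simp [hS])
  simp only [linearIndepOn_transpose_iff_isUnit_submatrix _ e]
  exact dense_setOf_isUnit_submatrix (Subtype.val_injective.comp e.injective)

variable [CompleteSpace 𝕂] [Finite ι]

theorem isOpen_setOf_inGeneralPosition : IsOpen {M : Matrix l ι 𝕂 | M.InGeneralPosition} := by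
  simp only [InGeneralPosition, ofPred_forall]
  exact isOpen_iInter_of_finite fun S => isOpen_iInter_of_finite fun _ =>
    isOpen_setOf_linearIndepOn_transpose _

theorem dense_setOf_inGeneralPosition : Dense {M : Matrix l ι 𝕂 | M.InGeneralPosition} := by
  simp only [InGeneralPosition, ofPred_forall]
  exact dense_iInter_of_isOpen_of_finite
    (fun S => isOpen_iInter_of_finite fun _ => isOpen_setOf_linearIndepOn_transpose _)
    fun S => dense_iInter_of_isOpen_of_finite (fun _ => isOpen_setOf_linearIndepOn_transpose _)
      dense_setOf_linearIndepOn_transpose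

end GeneralPosition

end Matrix

section Spark

variable {𝕂 : Type} [RCLike 𝕂] {l : Type} {m : ℕ}

theorem spark_le_card_of_not_linearIndepOn (M : Matrix l (Fin m) 𝕂) {S : Finset (Fin m)}
    (hS : ¬LinearIndepOn 𝕂 Mᵀ (S : Set (Fin m))) : spark M ≤ S.card :=
  Nat.sInf_le (mem_insert_of_mem _ ⟨S, rfl, hS⟩)

theorem spark_eq_card_add_one_iff [Fintype l] (M : Matrix l (Fin m) 𝕂)
    (hlm : Fintype.card l < m) :
    spark M = Fintype.card l + 1 ↔ M.InGeneralPosition := by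
  constructor
  · intro h S hS
    by_contra hS'
    have := spark_le_card_of_not_linearIndepOn M hS'
    omega
  · intro hM
    obtain ⟨S, -, hS⟩ := Finset.exists_subset_card_eq (s := (Finset.univ : Finset (Fin m)))
      (n := Fintype.card l + 1) (by simpa using hlm)
    have hdep : ¬LinearIndepOn 𝕂 Mᵀ (S : Set (Fin m)) := fun hS' => by
      have := hS'.fintype_card_le_finrank
      simp only [SetLike.coe_sort_coe, Fintype.card_coe, Module.finrank_fintype_fun_eq_card] at this
      omega
    refine le_antisymm (hS ▸ spark_le_card_of_not_linearIndepOn M hdep)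
      (le_csInf ⟨m + 1, mem_insert _ _⟩ ?_)
    rintro c (rfl | ⟨S, rfl, hS⟩)
    · omega
    by_contra! hlt
    exact hS (hM.linearIndepOn_of_card_le (by simpa using hlm.le) (by omega))

end Spark

section DeleteRow

variable {𝕂 : Type} [RCLike 𝕂] {n m : ℕ}

theorem continuous_deleteRow (j : Fin n) :
    Continuous fun Φ : Matrix (Fin n) (Fin m) 𝕂 => deleteRow Φ j :=
  continuous_pi fun i => continuous_apply i.1

theorem isOpenMap_deleteRow (j : Fin n) :
    IsOpenMap fun Φ : Matrix (Fin n) (Fin m) 𝕂 => deleteRow Φ j :=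
  isOpenMap_fst.comp (Homeomorph.piEquivPiSubtypeProd (· ≠ j) fun _ => Fin m → 𝕂).isOpenMap

end DeleteRow

/-- For `m ≥ n ≥ 1`, the set `P(n,m)` of matrices `Φ ∈ 𝕂^{n×m}` with
`spark(Φ^(j)) = n` for all `j` is open and dense in `𝕂^{n×m}`; in particular its
complement is closed and nowhere dense. -/
theorem generic_spark_open_dense {𝕂 : Type} [RCLike 𝕂] {n m : ℕ}
    (hn : 1 ≤ n) (hnm : n ≤ m) :
    IsOpen {Φ : Matrix (Fin n) (Fin m) 𝕂 | ∀ j : Fin n, spark (deleteRow Φ j) = n} ∧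
    Dense {Φ : Matrix (Fin n) (Fin m) 𝕂 | ∀ j : Fin n, spark (deleteRow Φ j) = n} ∧
    IsClosed {Φ : Matrix (Fin n) (Fin m) 𝕂 | ∀ j : Fin n, spark (deleteRow Φ j) = n}ᶜ ∧
    IsNowhereDense {Φ : Matrix (Fin n) (Fin m) 𝕂 | ∀ j : Fin n, spark (deleteRow Φ j) = n}ᶜ := by
  have hP : {Φ : Matrix (Fin n) (Fin m) 𝕂 | ∀ j : Fin n, spark (deleteRow Φ j) = n} =
      ⋂ j, {Φ | (deleteRow Φ j).InGeneralPosition} := by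
    ext Φ
    simp only [mem_ofPred_eq, mem_iInter]
    refine forall_congr' fun j => ?_
    have hcard : Fintype.card {i : Fin n // i ≠ j} + 1 = n := by
      simp only [ne_eq, Fintype.card_subtype_compl, Fintype.card_fin, Fintype.card_unique]
      omega
    have := spark_eq_card_add_one_iff (deleteRow Φ j) (by omega)
    rwa [hcard] at this
  have hopen (j : Fin n) :
      IsOpen {Φ : Matrix (Fin n) (Fin m) 𝕂 | (deleteRow Φ j).InGeneralPosition} :=
    (isOpen_setOf_inGeneralPosition (𝕂 := 𝕂)).preimage (continuous_deleteRow j)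
  have hdense (j : Fin n) :
      Dense {Φ : Matrix (Fin n) (Fin m) 𝕂 | (deleteRow Φ j).InGeneralPosition} :=
    (dense_setOf_inGeneralPosition (𝕂 := 𝕂)).preimage (isOpenMap_deleteRow j)
  rw [isClosed_isNowhereDense_iff_compl, compl_compl, hP]
  have hPopen := isOpen_iInter_of_finite hopen
  have hPdense := dense_iInter_of_isOpen_of_finite hopen hdense
  exact ⟨hPopen, hPdense, hPopen, hPdense⟩
end

section
/- Let m ≥ n ≥ 1 and let P(n,m) ⊂ 𝕂^{n×m} be the set of all matrices Φ such that spark(Φ^(j)) = n for every j = 1,…,n. Then the complement of P(n,m) in 𝕂^{n×m} has (induced Euclidean) Lebesgue measure zero. -/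
/-!
Since `n` columns of an `(n-1)`-row matrix are always dependent, the condition
`spark(Φ^(j)) = n` fails only if some `(n-1) × (n-1)` minor of `Φ^(j)` vanishes. A minor is a
nonzero polynomial in the entries of `Φ`, and the zero set of a nonzero polynomial is null: by
Fubini over one variable, off the null zero set of the leading coefficient each fibre is the
finite root set of a nonzero one-variable polynomial. So the complement of `P(n,m)` lies in a
finite union of null sets.
-/

open Matrix MeasureTheory

/-- Lebesgue measure on the space of `n × m` matrices over `𝕂`, obtained as the product
(Euclidean) measure from the measure on `𝕂`. -/
noncomputable instance matrixMeasureSpace {𝕂 : Type} [RCLike 𝕂] [MeasureSpace 𝕂]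
    [SigmaFinite (volume : Measure 𝕂)] {n m : ℕ} :
    MeasureSpace (Matrix (Fin n) (Fin m) 𝕂) :=
  inferInstanceAs (MeasureSpace (Fin n → Fin m → 𝕂))

open Set

theorem MeasureTheory.measurePreserving_curry {ι κ α : Type*} [Fintype ι] [Fintype κ]
    [MeasurableSpace α] (μ : Measure α) [SigmaFinite μ] :
    MeasurePreserving (MeasurableEquiv.curry ι κ α) (Measure.pi fun _ => μ)
      (Measure.pi fun _ : ι => Measure.pi fun _ : κ => μ) where
  measurable := (MeasurableEquiv.curry ι κ α).measurable
  map_eq := by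
    refine (Measure.pi_eq_generateFrom
      (C := fun _ => pi univ '' pi univ fun _ : κ => {s : Set α | MeasurableSet s})
      (fun _ => generateFrom_pi) (fun _ => isPiSystem_pi)
      (fun _ => Measure.FiniteSpanningSetsIn.pi fun _ => μ.toFiniteSpanningSetsIn) ?_).symm
    intro s hs
    choose t _ hts using hs
    have hpre : MeasurableEquiv.curry ι κ α ⁻¹' pi univ s = pi univ fun p => t p.1 p.2 := by
      ext x
      simp [← hts, MeasurableEquiv.coe_curry]
    rw [MeasurableEquiv.map_apply, hpre, Measure.pi_pi, Fintype.prod_prod_type]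
    simp [← hts, Measure.pi_pi]

theorem MvPolynomial.measurable_eval {R ι : Type*} [CommSemiring R] [MeasurableSpace R]
    [MeasurableAdd₂ R] [MeasurableMul₂ R] (p : MvPolynomial ι R) :
    Measurable fun x : ι → R => eval x p := by
  induction p using MvPolynomial.induction_on with
  | C a => simp only [eval_C]; exact measurable_const
  | add p q hp hq => simp only [map_add]; exact hp.add hq
  | mul_X p i hp => simp only [map_mul, eval_X]; exact hp.mul (measurable_pi_apply i)

theorem MvPolynomial.measurableSet_setOf_eval_eq_zero {R ι : Type*} [CommSemiring R]
    [MeasurableSpace R] [MeasurableAdd₂ R] [MeasurableMul₂ R] [MeasurableSingletonClass R]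
    (p : MvPolynomial ι R) :
    MeasurableSet {x : ι → R | eval x p = 0} :=
  p.measurable_eval (measurableSet_singleton 0)

namespace MvPolynomial

variable {R : Type*} [CommRing R] [MeasurableSpace R] [MeasurableAdd₂ R] [MeasurableMul₂ R]
  [MeasurableSingletonClass R] (μ : Measure R) [SigmaFinite μ]

theorem measure_pi_setOf_eval_eq_zero_of_equiv {α β : Type*} [Fintype α] [Fintype β]
    (e : α ≃ β)
    (h : ∀ p : MvPolynomial α R, p ≠ 0 →
      Measure.pi (fun _ : α => μ) {x | eval x p = 0} = 0)
    {p : MvPolynomial β R} (hp : p ≠ 0) :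
    Measure.pi (fun _ : β => μ) {x | eval x p = 0} = 0 := by
  have hp' : rename e.symm p ≠ 0 :=
    (rename_injective _ e.symm.injective).ne_iff' (map_zero _) |>.2 hp
  rw [← (measurePreserving_piCongrLeft (fun _ : β => μ) e).measure_preimage
    p.measurableSet_setOf_eval_eq_zero.nullMeasurableSet]
  convert h _ hp' using 2
  ext x
  have hx : MeasurableEquiv.piCongrLeft (fun _ => R) e x = x ∘ e.symm := by
    funext b
    simp [MeasurableEquiv.coe_piCongrLeft, Equiv.piCongrLeft_apply_eq_cast]
  simp [eval_rename, hx]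

variable [IsDomain R] [NullSingletonClass μ]

theorem measure_pi_setOf_eval_eq_zero_option {α : Type*} [Fintype α]
    (h : ∀ p : MvPolynomial α R, p ≠ 0 →
      Measure.pi (fun _ : α => μ) {x | eval x p = 0} = 0)
    {p : MvPolynomial (Option α) R} (hp : p ≠ 0) :
    Measure.pi (fun _ : Option α => μ) {x | eval x p = 0} = 0 := by
  set q := optionEquivLeft R α p
  have hq : q ≠ 0 := (optionEquivLeft R α).injective.ne_iff' (map_zero _) |>.2 hp
  have hlead : ∀ᵐ s ∂Measure.pi (fun _ : α => μ), eval s q.leadingCoeff ≠ 0 := by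
    rw [ae_iff]
    simpa using h _ (Polynomial.leadingCoeff_ne_zero.2 hq)
  rw [← Measure.pi_map_piOptionEquivProd (fun _ : Option α => μ),
    Measure.map_apply (MeasurableEquiv.measurable _) p.measurableSet_setOf_eval_eq_zero,
    Measure.measure_prod_null (MeasurableEquiv.measurable _ p.measurableSet_setOf_eval_eq_zero)]
  filter_upwards [hlead] with s hs
  have hqs : q.map (eval s) ≠ 0 := by
    intro h
    apply hs
    simpa [h] using (Polynomial.coeff_map (p := q) (eval s) q.natDegree).symm
  have hfibre : Prod.mk s ⁻¹' ((MeasurableEquiv.piOptionEquivProd fun _ => R).symm ⁻¹'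
      {x | eval x p = 0}) = {y | (q.map (eval s)).IsRoot y} := by
    ext y
    have hy : (MeasurableEquiv.piOptionEquivProd fun _ : Option α => R).symm (s, y) =
        fun i => Option.elim i y s := by
      funext i
      cases i <;> rfl
    simp [hy, q, optionEquivLeft_elim_eval]
  show μ _ = 0
  rw [hfibre]
  exact (Polynomial.finite_setOfPred_isRoot hqs).measure_zero μ

theorem measure_pi_setOf_eval_eq_zero {ι : Type*} [Fintype ι] {p : MvPolynomial ι R}
    (hp : p ≠ 0) : Measure.pi (fun _ : ι => μ) {x | eval x p = 0} = 0 :=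
  Fintype.induction_empty_option
    (P := fun ι _ => ∀ p : MvPolynomial ι R, p ≠ 0 →
      Measure.pi (fun _ : ι => μ) {x | eval x p = 0} = 0)
    (fun α β _ e h => let _ := Fintype.ofEquiv β e.symm
      fun _ => measure_pi_setOf_eval_eq_zero_of_equiv μ e h)
    (fun p hp => by
      obtain ⟨c, rfl⟩ := C_surjective PEmpty p
      simp_all)
    (fun _ _ h _ => measure_pi_setOf_eval_eq_zero_option μ h) ι p hp

end MvPolynomial

theorem Matrix.measure_pi_setOf_det_submatrix_eq_zero {R : Type*} [CommRing R] [IsDomain R]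
    [MeasurableSpace R] [MeasurableAdd₂ R] [MeasurableMul₂ R] [MeasurableSingletonClass R]
    (μ : Measure R) [SigmaFinite μ] [NullSingletonClass μ] {ι κ ν : Type*} [Fintype ι]
    [Fintype κ] [Fintype ν] [DecidableEq ν] {r : ν → ι} {c : ν → κ}
    (hr : Function.Injective r) (hc : Function.Injective c) :
    Measure.pi (fun _ : ι => Measure.pi fun _ : κ => μ)
      {A : ι → κ → R | ((Matrix.of A).submatrix r c).det = 0} = 0 := by
  set p := MvPolynomial.rename (Prod.map r c) (mvPolynomialX ν ν R).det
  have hp : p ≠ 0 := (MvPolynomial.rename_injective _ (hr.prodMap hc)).ne_iff' (map_zero _) |>.2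
    (det_mvPolynomialX_ne_zero ν R)
  have hset : {A : ι → κ → R | ((Matrix.of A).submatrix r c).det = 0} =
      (MeasurableEquiv.curry ι κ R).symm ⁻¹' {x | MvPolynomial.eval x p = 0} := by
    ext A
    simp [p, MvPolynomial.eval_rename, eval_det_mvPolynomialX, MeasurableEquiv.coe_curry_symm]
    rfl
  rw [hset, (measurePreserving_curry μ).symm.measure_preimage
    (MvPolynomial.measurableSet_setOf_eval_eq_zero p).nullMeasurableSet]
  exact MvPolynomial.measure_pi_setOf_eval_eq_zero μ hp

theorem Matrix.linearIndependent_cols_comp_iff_det_submatrix_ne_zero {K : Type*} [Field K]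
    {l κ ν : Type*} [Fintype ν] [DecidableEq ν] (M : Matrix l κ K) (e : ν ≃ l)
    (c : ν → κ) :
    LinearIndependent K (fun i r => M r (c i)) ↔ (M.submatrix e c).det ≠ 0 := by
  rw [← isUnit_iff_ne_zero, ← isUnit_iff_isUnit_det, ← linearIndependent_cols_iff_isUnit,
    ← (LinearEquiv.funCongrLeft K K e).toLinearMap.linearIndependent_iff (LinearEquiv.ker _)]
  rfl

theorem spark_eq_card_add_one {𝕂 : Type} [RCLike 𝕂] {l : Type} [Fintype l] {m : ℕ}
    (M : Matrix l (Fin m) 𝕂) (hm : Fintype.card l ≤ m)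
    (h : ∀ S : Finset (Fin m), S.card = Fintype.card l →
      LinearIndependent 𝕂 (fun i : S => fun r => M r i)) :
    spark M = Fintype.card l + 1 := by
  refine le_antisymm (Nat.sInf_le ?_) (le_csInf ⟨_, mem_insert _ _⟩ ?_)
  · rcases hm.eq_or_lt with hm | hm
    · rw [hm]
      exact mem_insert _ _
    obtain ⟨S, -, hS⟩ := Finset.exists_subset_card_eq (s := (Finset.univ : Finset (Fin m)))
      (n := Fintype.card l + 1) (by simpa using hm)
    refine mem_insert_of_mem _ ⟨S, hS, fun hli => ?_⟩
    have := hli.fintype_card_le_finrank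
    simp [hS] at this
  · rintro c (rfl | ⟨S, rfl, hS⟩)
    · omega
    by_contra! hlt
    obtain ⟨T, hST, hT⟩ :=
      Finset.exists_superset_card_eq (Nat.lt_succ_iff.1 hlt) (by simpa using hm)
    exact hS ((h T hT).comp (inclusion hST) (inclusion_injective hST))

theorem generic_spark_complement_measure_zero_general {𝕂 : Type} [RCLike 𝕂]
    [MeasureSpace 𝕂] [BorelSpace 𝕂] [SigmaFinite (volume : Measure 𝕂)]
    [(volume : Measure 𝕂).IsAddHaarMeasure] {n m : ℕ}
    (hnm : n ≤ m) :
    volume {Φ : Matrix (Fin n) (Fin m) 𝕂 | ∀ j : Fin n, spark (deleteRow Φ j) = n}ᶜ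
      = 0 := by
  have hcard (j : Fin n) : Fintype.card {i // i ≠ j} + 1 = n := by
    rw [Fintype.card_subtype_compl, Fintype.card_subtype_eq, Fintype.card_fin]
    have := j.pos
    omega
  let e (j : Fin n) (S : Finset (Fin m)) (hS : S.card = Fintype.card {i // i ≠ j}) :
      S ≃ {i // i ≠ j} :=
    Fintype.equivOfCardEq (by rw [Fintype.card_coe, hS])
  have hsub : {Φ : Matrix (Fin n) (Fin m) 𝕂 | ∀ j, spark (deleteRow Φ j) = n}ᶜ ⊆
      ⋃ (j) (S : Finset (Fin m)) (hS),
        {Φ | (Φ.submatrix (Subtype.val ∘ e j S hS) Subtype.val).det = 0} := by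
    intro Φ hΦ
    obtain ⟨j, hj⟩ := not_forall.1 hΦ
    simp only [mem_iUnion]
    by_contra! hdet
    have hspark := spark_eq_card_add_one (deleteRow Φ j) (by have := hcard j; omega)
      fun S hS => ((deleteRow Φ j).linearIndependent_cols_comp_iff_det_submatrix_ne_zero
        (e j S hS) _).2 (hdet j S hS)
    exact hj (hspark.trans (hcard j))
  refine measure_mono_null hsub (measure_iUnion_null fun j => measure_iUnion_null fun S =>
    measure_iUnion_null fun hS => ?_)
  exact measure_pi_setOf_det_submatrix_eq_zero volume
    (Subtype.val_injective.comp (e j S hS).injective) Subtype.val_injective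

/-- For `m ≥ n ≥ 1`, the complement of the set `P(n,m)` of matrices
`Φ ∈ 𝕂^{n×m}` with `spark(Φ^(j)) = n` for all `j` has Lebesgue measure zero (where the
Lebesgue measure on `𝕂 = ℝ` or `ℂ` is formalized as an additive Haar measure). -/
theorem generic_spark_complement_measure_zero {𝕂 : Type} [RCLike 𝕂]
    [MeasureSpace 𝕂] [BorelSpace 𝕂] [SigmaFinite (volume : Measure 𝕂)]
    [(volume : Measure 𝕂).IsAddHaarMeasure] {n m : ℕ}
    (hn : 1 ≤ n) (hnm : n ≤ m) :
    volume {Φ : Matrix (Fin n) (Fin m) 𝕂 | ∀ j : Fin n, spark (deleteRow Φ j) = n}ᶜ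
      = 0 :=
  generic_spark_complement_measure_zero_general hnm
end

section
/- Let m ≥ n ≥ 1 and let N(n,m) be the set of all frames Φ ∈ 𝕂^{n×m} whose sparsest dual frame has exactly n² non-zero entries, i.e., min{‖Ψ‖₀ : Ψ Φ* = I_n} = n². Then every frame Φ ∈ 𝕂^{n×m} is arbitrarily close (in the Euclidean topology on 𝕂^{n×m}) to a frame in N(n,m). -/
open Matrix

/-- `N(n,m)`: the set of frames in `𝕂^{n×m}` whose sparsest dual frame has exactly
`n²` non-zero entries. -/
def maxSparsityFrames (𝕂 : Type) [RCLike 𝕂] (n m : ℕ) :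
    Set (Matrix (Fin n) (Fin m) 𝕂) :=
  {Φ | Φ.rank = n ∧
    IsLeast {c | ∃ Ψ : Matrix (Fin n) (Fin m) 𝕂, Ψ * Φᴴ = 1 ∧ l0Norm Ψ = c} (n ^ 2)}

/-!
Call a matrix totally nonsingular if all its square minors are nonzero. Each minor condition
cuts out an open dense set (moving along a line `A + ε E` with `E` restricting to the identity on
the minor, the minor becomes `det (M + ε 1)`, a monic polynomial in `ε`), so totally nonsingular
frames are dense. For such a frame `Φ` and a dual `Ψ`, the vector `star (Ψ i)` is mapped by `Φ`
to zero in every coordinate but `i`; if it had fewer than `n` nonzero entries, a square minor of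
`Φ` would have a nontrivial kernel. So every row of `Ψ` has at least `n` nonzero entries, and
inverting `Φ` on any `n` of its columns and padding with zeros attains `n²`.
-/

open Finset

namespace Matrix

variable {ι κ K : Type*}

def IsTotallyNonsingular [CommRing K] (A : Matrix ι κ K) : Prop :=
  ∀ (k : ℕ) (r : Fin k ↪ ι) (t : Fin k ↪ κ), (A.submatrix r t).det ≠ 0

theorem exists_submatrix_eq_one [Zero K] [One K] {k : ℕ} (r : Fin k ↪ ι) (t : Fin k ↪ κ) :
    ∃ E : Matrix ι κ K, E.submatrix r t = 1 := by
  refine ⟨of fun i j => Function.extend r (fun a => Function.extend t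
    ((1 : Matrix (Fin k) (Fin k) K) a) 0 j) 0 i, ?_⟩
  ext a b
  simp [r.injective.extend_apply, t.injective.extend_apply]

section Density

variable [NontriviallyNormedField K]

theorem isOpen_setOf_det_submatrix_ne_zero {k : ℕ} (r : Fin k → ι) (t : Fin k → κ) :
    IsOpen {A : Matrix ι κ K | (A.submatrix r t).det ≠ 0} :=
  isOpen_ne.preimage (continuous_id.matrix_submatrix r t).matrix_det

theorem dense_setOf_det_submatrix_ne_zero {k : ℕ} (r : Fin k ↪ ι) (t : Fin k ↪ κ) :
    Dense {A : Matrix ι κ K | (A.submatrix r t).det ≠ 0} := by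
  intro A
  obtain ⟨E, hE⟩ := exists_submatrix_eq_one (K := K) r t
  set p := (-A.submatrix r t).charpoly
  have hline (ε : K) : ((A + ε • E).submatrix r t).det = p.eval ε := by
    change (A.submatrix r t + ε • E.submatrix r t).det = _
    rw [hE, eval_charpoly, sub_neg_eq_add, add_comm, scalar_apply, smul_one_eq_diagonal]
  have hdense : Dense {ε : K | p.eval ε ≠ 0} := by
    convert dense_univ.sdiff_finite (Polynomial.finite_setOfPred_isRoot (charpoly_monic
      (-A.submatrix r t)).ne_zero) using 1
    ext; simp [p]
  simpa using map_mem_closure (f := fun ε : K => A + ε • E) (by fun_prop) (hdense 0)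
    fun ε hε => by simpa [hline] using hε

variable [Fintype ι] [Fintype κ]

theorem dense_setOf_isTotallyNonsingular : Dense {A : Matrix ι κ K | A.IsTotallyNonsingular} := by
  have hfin : {A : Matrix ι κ K | A.IsTotallyNonsingular} =
      ⋂ x : Σ k : Fin (Fintype.card ι + 1), (Fin k ↪ ι) × (Fin k ↪ κ),
        {A | (A.submatrix x.2.1 x.2.2).det ≠ 0} := by
    ext A
    simp only [Set.mem_ofPred_eq, Set.mem_iInter, Sigma.forall, Prod.forall]
    refine ⟨fun h k r t => h k r t, fun h k r t => ?_⟩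
    have hk : k < Fintype.card ι + 1 := by
      simpa using Nat.lt_succ_of_le (Fintype.card_le_of_embedding r)
    exact h ⟨k, hk⟩ r t
  rw [hfin, ← Set.sInter_range]
  refine (Set.finite_range _).dense_sInter ?_ ?_ <;> rintro _ ⟨x, rfl⟩
  exacts [isOpen_setOf_det_submatrix_ne_zero _ _, dense_setOf_det_submatrix_ne_zero _ _]

end Density

section Field

open scoped Classical

variable [Fintype κ] [Field K] {A : Matrix ι κ K}

theorem IsTotallyNonsingular.card_lt_card_support (hA : A.IsTotallyNonsingular) {v : κ → K}
    (hv : v ≠ 0) {R : Finset ι} (hR : ∀ i ∈ R, (A *ᵥ v) i = 0) :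
    R.card < #{j | v j ≠ 0} := by
  set T : Finset κ := {j | v j ≠ 0}
  by_contra! hle
  obtain ⟨R', hR'R, hR'card⟩ := exists_subset_card_eq hle
  let eR := (R'.equivFin.trans (finCongr hR'card)).symm
  let r : Fin T.card ↪ ι := ⟨fun a => eR a, Subtype.val_injective.comp eR.injective⟩
  let t : Fin T.card ↪ κ :=
    ⟨fun b => T.equivFin.symm b, Subtype.val_injective.comp T.equivFin.symm.injective⟩
  have hker : A.submatrix r t *ᵥ (v ∘ t) = 0 := by
    ext a
    calc (A.submatrix r t *ᵥ (v ∘ t)) a = ∑ j ∈ T, A (r a) j * v j := by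
          rw [← sum_coe_sort, ← T.equivFin.symm.sum_comp]; rfl
      _ = (A *ᵥ v) (r a) := sum_filter_of_ne fun j _ h => right_ne_zero_of_mul h
      _ = 0 := hR _ (hR'R (eR a).prop)
  have hvt : v ∘ t ≠ 0 := by
    obtain ⟨j, hj⟩ := Function.ne_iff.mp hv
    have hjT : j ∈ T := by simpa [T] using hj
    exact fun h => hj (by simpa [t] using congrFun h (T.equivFin ⟨j, hjT⟩))
  exact hA _ r t (exists_mulVec_eq_zero_iff.mp ⟨_, hvt, hker⟩)

variable [StarRing K] [Fintype ι] [DecidableEq ι]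

theorem IsTotallyNonsingular.card_le_card_support_of_mul_conjTranspose_eq_one
    (hA : A.IsTotallyNonsingular) {Ψ : Matrix ι κ K} (hΨ : Ψ * Aᴴ = 1) (i : ι) :
    Fintype.card ι ≤ #{j | Ψ i j ≠ 0} := by
  have hrow : star (A *ᵥ star (Ψ i)) = (1 : Matrix ι ι K) i := by
    rw [star_mulVec, star_star, ← mul_apply_eq_vecMul, hΨ]
  have hAv (l : ι) : (A *ᵥ star (Ψ i)) l = star ((1 : Matrix ι ι K) i l) := by
    rw [← hrow, Pi.star_apply, star_star]
  have hv : star (Ψ i) ≠ 0 := fun h => by simpa [h] using hAv i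
  have := hA.card_lt_card_support hv (R := univ.erase i) fun l hl => by
    simp [hAv, one_apply_ne' (ne_of_mem_erase hl)]
  simp only [card_erase_of_mem (mem_univ i), card_univ, Pi.star_apply, ne_eq,
    star_eq_zero] at this ⊢
  omega

theorem IsTotallyNonsingular.exists_mul_conjTranspose_eq_one (hA : A.IsTotallyNonsingular)
    (h : Fintype.card ι ≤ Fintype.card κ) :
    ∃ Ψ : Matrix ι κ K, Ψ * Aᴴ = 1 ∧ ∀ i, #{j | Ψ i j ≠ 0} ≤ Fintype.card ι := by
  obtain ⟨f⟩ := Function.Embedding.nonempty_of_card_le h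
  set S := A.submatrix id f
  have hS : IsUnit Sᴴ.det := by
    rw [det_conjTranspose, isUnit_iff_ne_zero, star_ne_zero]
    let e := Fintype.equivFin ι
    have := hA _ e.symm.toEmbedding (e.symm.toEmbedding.trans f)
    rwa [show A.submatrix e.symm.toEmbedding (e.symm.toEmbedding.trans f) =
      S.submatrix e.symm e.symm from rfl, det_submatrix_equiv_self] at this
  set P : Matrix ι κ K := (1 : Matrix κ κ K).submatrix f (Equiv.refl κ)
  have hP : P * Aᴴ = Sᴴ := by
    rw [one_submatrix_mul, conjTranspose_submatrix]; rfl
  refine ⟨Sᴴ⁻¹ * P, by rw [Matrix.mul_assoc, hP, nonsing_inv_mul _ hS], fun i => ?_⟩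
  calc #{j | (Sᴴ⁻¹ * P) i j ≠ 0} ≤ (univ.map f).card := by
        refine card_le_card fun j hj => ?_
        by_contra hjf
        have hfj (a : ι) : f a ≠ j := fun h => hjf (h ▸ mem_map_of_mem f (mem_univ a))
        refine (mem_filter.mp hj).2 (sum_eq_zero fun a _ => ?_)
        exact mul_eq_zero_of_right _ (one_apply_ne (hfj a))
    _ = Fintype.card ι := by simp

end Field

theorem rank_eq_card_of_mul_eq_one [Fintype ι] [Fintype κ] [DecidableEq ι] [CommRing K]
    [StrongRankCondition K] {A : Matrix ι κ K} {B : Matrix κ ι K} (h : A * B = 1) :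
    A.rank = Fintype.card ι :=
  le_antisymm A.rank_le_card_height (by simpa [h] using rank_mul_le_left A B)

end Matrix

section Frames

open scoped Classical

variable {𝕂 : Type} [RCLike 𝕂] {n m : ℕ}

theorem l0Norm_eq_sum_card_support (Ψ : Matrix (Fin n) (Fin m) 𝕂) :
    l0Norm Ψ = ∑ i, #{j | Ψ i j ≠ 0} := by
  rw [l0Norm, ← coe_filter_univ, Set.ncard_coe_finset, card_filter, Fintype.sum_prod_type]
  simp [card_filter]

theorem Matrix.IsTotallyNonsingular.mem_maxSparsityFrames (hnm : n ≤ m)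
    {Φ : Matrix (Fin n) (Fin m) 𝕂} (hΦ : Φ.IsTotallyNonsingular) :
    Φ ∈ maxSparsityFrames 𝕂 n m := by
  have hdual (Ψ : Matrix (Fin n) (Fin m) 𝕂) (hΨ : Ψ * Φᴴ = 1) : n ^ 2 ≤ l0Norm Ψ := by
    rw [l0Norm_eq_sum_card_support, sq]
    simpa using sum_le_sum (s := univ) fun i _ =>
      hΦ.card_le_card_support_of_mul_conjTranspose_eq_one hΨ i
  obtain ⟨Ψ, hΨ, hsparse⟩ := hΦ.exists_mul_conjTranspose_eq_one (by simpa using hnm)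
  have hrank : Φ.rank = n := by
    simpa using rank_eq_card_of_mul_eq_one (B := Ψᴴ) (by simpa using congrArg conjTranspose hΨ)
  refine ⟨hrank, ⟨Ψ, hΨ, le_antisymm ?_ (hdual Ψ hΨ)⟩, fun c ⟨Ψ', hΨ', hc⟩ => hc ▸ hdual Ψ' hΨ'⟩
  rw [l0Norm_eq_sum_card_support, sq]
  simpa using sum_le_sum (s := univ) fun i _ => hsparse i

end Frames

theorem frames_close_to_max_sparsity_general {𝕂 : Type} [RCLike 𝕂] {n m : ℕ}
    (hnm : n ≤ m)
    (Φ : Matrix (Fin n) (Fin m) 𝕂) :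
    Φ ∈ closure (maxSparsityFrames 𝕂 n m) :=
  closure_mono (fun _ hA => hA.mem_maxSparsityFrames hnm) (dense_setOf_isTotallyNonsingular Φ)

/-- For `m ≥ n ≥ 1`, every frame `Φ ∈ 𝕂^{n×m}` is arbitrarily close
(in the Euclidean topology) to a frame whose sparsest dual has exactly `n²` non-zero
entries, i.e. every frame lies in the closure of `N(n,m)`. -/
theorem frames_close_to_max_sparsity {𝕂 : Type} [RCLike 𝕂] {n m : ℕ}
    (hn : 1 ≤ n) (hnm : n ≤ m)
    (Φ : Matrix (Fin n) (Fin m) 𝕂) (hΦ : Φ.rank = n) :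
    Φ ∈ closure (maxSparsityFrames 𝕂 n m) :=
  frames_close_to_max_sparsity_general hnm Φ
end

section
/- Let Φ be a frame for 𝕂^n with m vectors and lower frame bound A (i.e., A is the smallest eigenvalue of the frame operator Φ Φ*). If m ≥ 2n, then for every real c ≥ 1/A there exists a tight dual frame Ψ of Φ with frame bound c, i.e., a matrix Ψ ∈ 𝕂^{n×m} with Ψ Φ* = I_n and Ψ Ψ* = c·I_n. -/
/-!
Let `S = Φ Φ*`. Its spectrum lies in `[A, ∞)`, so `S` is invertible and `c - S⁻¹ ≥ 0` in the
Loewner order; write `c - S⁻¹ = B* B`. Since `rank Φ ≤ n` and `m ≥ 2n`, the kernel of `Φ` contains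
`n` orthonormal vectors, the columns of some `W` with `Φ W = 0` and `W* W = 1`. Then
`Ψ = S⁻¹ Φ + B* W*` satisfies `Ψ Φ* = S⁻¹ S = 1` and, the cross terms vanishing because `Φ W = 0`,
`Ψ Ψ* = S⁻¹ + B* B = c`.
-/

open Matrix Polynomial

/-- `σ : Fin n → ℝ` is the non-increasingly ordered sequence of singular values of the
`n × m` matrix `Φ`: the `σ i` are positive, non-increasing, and their squares are the
eigenvalues (with multiplicity) of `Φ Φ*`, encoded via the characteristic polynomial. -/
def HasSingularValues {𝕂 : Type} [RCLike 𝕂] {n m : ℕ}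
    (Φ : Matrix (Fin n) (Fin m) 𝕂) (σ : Fin n → ℝ) : Prop :=
  Antitone σ ∧ (∀ i, 0 < σ i) ∧
    (Φ * Φᴴ).charpoly = ∏ i : Fin n, (X - C ((σ i : 𝕂) ^ 2))

open Module

lemma Submodule.exists_orthonormal_fin_of_le_finrank {𝕂 E : Type*} [RCLike 𝕂]
    [NormedAddCommGroup E] [InnerProductSpace 𝕂 E] (K : Submodule 𝕂 E) [FiniteDimensional 𝕂 K]
    {k : ℕ} (hk : k ≤ finrank 𝕂 K) :
    ∃ v : Fin k → E, Orthonormal 𝕂 v ∧ ∀ i, v i ∈ K := by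
  let b := stdOrthonormalBasis 𝕂 K
  refine ⟨fun i => b (Fin.castLE hk i), ?_, fun i => (b _).2⟩
  exact (b.orthonormal.comp _ (Fin.castLE_injective hk)).comp_linearIsometry K.subtypeₗᵢ

lemma Matrix.exists_mul_eq_zero_conjTranspose_mul_self_eq_one {𝕂 ι κ : Type*} [RCLike 𝕂]
    [Fintype ι] [Fintype κ] [DecidableEq κ] (Φ : Matrix ι κ 𝕂) {k : ℕ}
    (hk : k + Φ.rank ≤ Fintype.card κ) :
    ∃ W : Matrix κ (Fin k) 𝕂, Φ * W = 0 ∧ Wᴴ * W = 1 := by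
  let f := toEuclideanLin Φ
  have hker : k ≤ finrank 𝕂 (LinearMap.ker f) := by
    have hrank : Φ.rank = finrank 𝕂 (LinearMap.range f) :=
      Φ.rank_eq_finrank_range_toLin (PiLp.basisFun 2 𝕂 ι) (PiLp.basisFun 2 𝕂 κ)
    have := LinearMap.finrank_range_add_finrank_ker f
    rw [finrank_euclideanSpace] at this
    omega
  obtain ⟨v, hv, hvK⟩ := (LinearMap.ker f).exists_orthonormal_fin_of_le_finrank hker
  refine ⟨Matrix.of fun x i => v i x, ?_, ?_⟩
  · ext x i
    have := congrFun (congrArg WithLp.ofLp (LinearMap.mem_ker.mp (hvK i))) x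
    simpa [f, mul_apply, mulVec, dotProduct] using this
  · ext i j
    have := orthonormal_iff_ite.mp hv i j
    rw [EuclideanSpace.inner_eq_star_dotProduct] at this
    simpa [mul_apply, dotProduct, mul_comm, one_apply] using this

lemma Matrix.spectrum_eq_range_of_charpoly_eq_prod {K ι : Type*} [Field K] [Fintype ι]
    [DecidableEq ι] {M : Matrix ι ι K} {μ : ι → K} (h : M.charpoly = ∏ i, (X - C (μ i))) :
    spectrum K M = Set.range μ := by
  ext r
  rw [mem_spectrum_iff_isRoot_charpoly, h, IsRoot.def, eval_prod, Finset.prod_eq_zero_iff]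
  simp [sub_eq_zero, eq_comm]

open scoped MatrixOrder ComplexOrder in
lemma Matrix.posSemidef_smul_one_sub_inv {𝕂 ι : Type*} [RCLike 𝕂] [Fintype ι] [DecidableEq ι]
    {S : Matrix ι ι 𝕂} (hS : S.IsHermitian) {a c : ℝ} (ha : 0 < a) (hac : a⁻¹ ≤ c)
    (hspec : ∀ x ∈ spectrum ℝ S, a ≤ x) : ((c : 𝕂) • 1 - S⁻¹).PosSemidef := by
  have hunit : IsUnit S := (spectrum.zero_notMem_iff ℝ).mp fun h0 => (hspec 0 h0).not_gt ha
  lift S to (Matrix ι ι 𝕂)ˣ using hunit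
  rw [← Matrix.le_iff, ← coe_units_inv, ← RCLike.real_smul_eq_coe_smul,
    ← Algebra.algebraMap_eq_smul_one]
  refine le_algebraMap_of_spectrum_le (fun x hx => ?_) (by rw [coe_units_inv]; exact hS.inv)
  rw [← spectrum.map_inv, Set.mem_inv] at hx
  have hax := hspec _ hx
  have hx0 : 0 < x := inv_pos.mp (ha.trans_le hax)
  exact (le_inv_comm₀ ha hx0 |>.mp hax).trans hac

open scoped MatrixOrder ComplexOrder in
lemma Matrix.exists_tight_dual_of_posSemidef {𝕂 ι κ : Type*} [RCLike 𝕂] [Fintype ι]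
    [DecidableEq ι] [Fintype κ] {Φ : Matrix ι κ 𝕂} (hS : IsUnit (Φ * Φᴴ)) {W : Matrix κ ι 𝕂}
    (hΦW : Φ * W = 0) (hW : Wᴴ * W = 1) {c : ℝ}
    (hc : ((c : 𝕂) • 1 - (Φ * Φᴴ)⁻¹).PosSemidef) :
    ∃ Ψ : Matrix ι κ 𝕂, Ψ * Φᴴ = 1 ∧ Ψ * Ψᴴ = (c : 𝕂) • 1 := by
  obtain ⟨B, hB⟩ := CStarAlgebra.nonneg_iff_eq_star_mul_self.mp hc.nonneg
  have hSS : (Φ * Φᴴ)⁻¹ * (Φ * Φᴴ) = 1 := nonsing_inv_mul _ ((isUnit_iff_isUnit_det _).mp hS)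
  have hSH : (Φ * Φᴴ)⁻¹ᴴ = (Φ * Φᴴ)⁻¹ := by
    rw [conjTranspose_nonsing_inv, (isHermitian_mul_conjTranspose_self Φ).eq]
  have hWΦ : Wᴴ * Φᴴ = 0 := by rw [← conjTranspose_mul, hΦW, conjTranspose_zero]
  refine ⟨(Φ * Φᴴ)⁻¹ * Φ + Bᴴ * Wᴴ, ?_, ?_⟩
  · rw [Matrix.add_mul, Matrix.mul_assoc, Matrix.mul_assoc, hWΦ, Matrix.mul_zero, add_zero, hSS]
  · have hPP : (Φ * Φᴴ)⁻¹ * Φ * ((Φ * Φᴴ)⁻¹ * Φ)ᴴ = (Φ * Φᴴ)⁻¹ := by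
      rw [conjTranspose_mul, hSH, Matrix.mul_assoc, ← Matrix.mul_assoc Φ, ← Matrix.mul_assoc, hSS,
        Matrix.one_mul]
    have hPR : (Φ * Φᴴ)⁻¹ * Φ * (Bᴴ * Wᴴ)ᴴ = 0 := by
      rw [conjTranspose_mul, conjTranspose_conjTranspose, conjTranspose_conjTranspose,
        Matrix.mul_assoc, ← Matrix.mul_assoc Φ, hΦW, Matrix.zero_mul, Matrix.mul_zero]
    have hRP : Bᴴ * Wᴴ * ((Φ * Φᴴ)⁻¹ * Φ)ᴴ = 0 := by
      rw [← conjTranspose_conjTranspose (Bᴴ * Wᴴ), ← conjTranspose_mul, hPR, conjTranspose_zero]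
    have hRR : Bᴴ * Wᴴ * (Bᴴ * Wᴴ)ᴴ = Bᴴ * B := by
      rw [conjTranspose_mul, conjTranspose_conjTranspose, conjTranspose_conjTranspose,
        Matrix.mul_assoc, ← Matrix.mul_assoc Wᴴ, hW, Matrix.one_mul]
    rw [conjTranspose_add, Matrix.add_mul, Matrix.mul_add, Matrix.mul_add, hPP, hPR, hRP, hRR,
      add_zero, zero_add, ← star_eq_conjTranspose, ← hB, add_sub_cancel]

lemma HasSingularValues.sq_le_of_mem_spectrum {𝕂 : Type} [RCLike 𝕂] {n m : ℕ}
    {Φ : Matrix (Fin n) (Fin m) 𝕂} {σ : Fin n → ℝ} (hσ : HasSingularValues Φ σ) {i : Fin n}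
    (hi : IsTop i) {x : ℝ} (hx : x ∈ spectrum ℝ (Φ * Φᴴ)) : σ i ^ 2 ≤ x := by
  obtain ⟨hanti, hpos, hchar⟩ := hσ
  rw [← spectrum.algebraMap_mem_iff 𝕂, spectrum_eq_range_of_charpoly_eq_prod hchar] at hx
  obtain ⟨j, hj⟩ := hx
  have hxj : x = σ j ^ 2 := by
    simp only [RCLike.algebraMap_eq_ofReal] at hj
    exact_mod_cast hj.symm
  rw [hxj]
  exact pow_le_pow_left₀ (hpos i).le (hanti (hi j)) 2

/-- Let `Φ` be a frame for `𝕂^n` with `m ≥ 2n` vectors and lower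
frame bound `A` (the smallest eigenvalue of `Φ Φ*`, i.e. `A = σ_n²`). Then for every
`c ≥ 1/A` there is a tight dual frame `Ψ` of `Φ` with frame bound `c`, i.e.
`Ψ Φ* = I_n` and `Ψ Ψ* = c·I_n`. -/
theorem exists_tight_dual_of_two_n_le {𝕂 : Type} [RCLike 𝕂] {n m : ℕ}
    (hn : 1 ≤ n) (hm : 2 * n ≤ m)
    (Φ : Matrix (Fin n) (Fin m) 𝕂)
    (σ : Fin n → ℝ) (hσ : HasSingularValues Φ σ)
    (A : ℝ) (hA : A = σ ⟨n - 1, by omega⟩ ^ 2)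
    (c : ℝ) (hc : 1 / A ≤ c) :
    ∃ Ψ : Matrix (Fin n) (Fin m) 𝕂,
      Ψ * Φᴴ = 1 ∧ Ψ * Ψᴴ = (c : 𝕂) • (1 : Matrix (Fin n) (Fin n) 𝕂) := by
  have hA_pos : 0 < A := hA ▸ pow_pos (hσ.2.1 _) 2
  have hspec : ∀ x ∈ spectrum ℝ (Φ * Φᴴ), A ≤ x := fun x hx =>
    hA ▸ hσ.sq_le_of_mem_spectrum (fun j => Fin.le_def.mpr (Nat.le_sub_one_of_lt j.2)) hx
  have hS : IsUnit (Φ * Φᴴ) :=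
    (spectrum.zero_notMem_iff ℝ).mp fun h0 => (hspec 0 h0).not_gt hA_pos
  obtain ⟨W, hΦW, hW⟩ := Φ.exists_mul_eq_zero_conjTranspose_mul_self_eq_one (k := n)
    (by rw [Fintype.card_fin]; have := Φ.rank_le_height; omega)
  exact exists_tight_dual_of_posSemidef hS hΦW hW <|
    posSemidef_smul_one_sub_inv (isHermitian_mul_conjTranspose_self Φ) hA_pos
      (by rwa [one_div] at hc) hspec
end

section
/- Let Φ be a frame for 𝕂^n with m = 2n−1 vectors and lower frame bound A. Then there exists a tight dual frame Ψ of Φ, and the only possible frame bound of a tight dual frame of Φ is 1/A; that is, there exists Ψ with Ψ Φ* = I_n and Ψ Ψ* = (1/A)·I_n, and every Ψ with Ψ Φ* = I_n and Ψ Ψ* = c·I_n satisfies c = 1/A. -/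
open Matrix Polynomial

/-!
Diagonalising the frame operator `S = Φ Φ*` by a unitary reduces everything to `S = diag μ`,
with `A = min μ`. Every dual frame is `Ψ = S⁻¹ Φ + W` with `W Φ* = 0`, and then
`Ψ Ψ* = S⁻¹ + W W*`, so `Ψ` is tight with bound `c` iff `W W* = c - S⁻¹`. Positivity of `W W*`
gives `c ≥ 1/A`. The rows of `W` are conjugates of vectors of `ker Φ`, which has dimension
`m - n = n - 1`, so `W W*` is singular and `c = 1/μ_j ≤ 1/A` for some `j`. Conversely `1/A - S⁻¹`
is a nonnegative diagonal matrix with at most `n - 1` nonzero entries, and it is `W W*` for `W`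
built from pairwise orthogonal vectors of `ker Φ` with prescribed norms.
-/

open scoped ComplexOrder

variable {𝕂 : Type*} [RCLike 𝕂] {ι κ : Type*}

theorem isHermitian_diagonal_ofReal [DecidableEq ι] (d : ι → ℝ) :
    (diagonal fun i => (d i : 𝕂)).IsHermitian :=
  isHermitian_diagonal_of_self_adjoint _ (funext fun i => RCLike.conj_ofReal (d i))

variable [Fintype ι] [Fintype κ]

def IsTightDual [DecidableEq ι] (Φ Ψ : Matrix ι κ 𝕂) (c : ℝ) : Prop :=
  Ψ * Φᴴ = 1 ∧ Ψ * Ψᴴ = (c : 𝕂) • 1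

theorem IsTightDual.unitary_mul [DecidableEq ι] {Φ Ψ : Matrix ι κ 𝕂} {c : ℝ}
    (h : IsTightDual Φ Ψ c) {U : Matrix ι ι 𝕂} (hU : U ∈ unitary (Matrix ι ι 𝕂)) :
    IsTightDual (U * Φ) (U * Ψ) c := by
  have hUU : U * Uᴴ = 1 := Unitary.mul_star_self_of_mem hU
  constructor
  · rw [conjTranspose_mul, Matrix.mul_assoc, ← Matrix.mul_assoc Ψ, h.1, Matrix.one_mul, hUU]
  · rw [conjTranspose_mul, Matrix.mul_assoc, ← Matrix.mul_assoc Ψ, h.2, Matrix.smul_mul,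
      Matrix.one_mul, Matrix.mul_smul, hUU]

theorem rank_unitary_mul [DecidableEq ι] {U : Matrix ι ι 𝕂} (hU : U ∈ unitary (Matrix ι ι 𝕂))
    (Φ : Matrix ι κ 𝕂) : (U * Φ).rank = Φ.rank :=
  rank_mul_eq_right_of_isUnit_det _ _
    (isUnit_det_of_right_inverse (Unitary.mul_star_self_of_mem hU))

theorem star_eigenvectorUnitary_mul_mul_conjTranspose [DecidableEq ι] (Φ : Matrix ι κ 𝕂)
    (hS : (Φ * Φᴴ).IsHermitian) :
    star (hS.eigenvectorUnitary : Matrix ι ι 𝕂) * Φ *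
        (star (hS.eigenvectorUnitary : Matrix ι ι 𝕂) * Φ)ᴴ =
      diagonal fun i => (hS.eigenvalues i : 𝕂) := by
  rw [conjTranspose_mul, ← star_eq_conjTranspose, star_star, Matrix.mul_assoc,
    ← Matrix.mul_assoc Φ, ← Matrix.mul_assoc, ← Unitary.conjStarAlgAut_star_apply (S := 𝕂),
    hS.conjStarAlgAut_star_eigenvectorUnitary]
  rfl

theorem add_mul_conjTranspose_self_of_mul_conjTranspose_eq_zero [DecidableEq ι]
    {G : Matrix ι ι 𝕂} {Φ W : Matrix ι κ 𝕂} (hG : G * (Φ * Φᴴ) = 1) (hGH : G.IsHermitian)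
    (hW : W * Φᴴ = 0) :
    (G * Φ + W) * (G * Φ + W)ᴴ = G + W * Wᴴ := by
  have hW' : Φ * Wᴴ = 0 := by simpa using congrArg conjTranspose hW
  rw [conjTranspose_add, conjTranspose_mul, hGH.eq, Matrix.add_mul, Matrix.mul_add,
    Matrix.mul_add, ← Matrix.mul_assoc W, hW, Matrix.zero_mul, Matrix.mul_assoc G Φ Wᴴ, hW',
    Matrix.mul_zero, ← Matrix.mul_assoc, Matrix.mul_assoc G, hG, Matrix.one_mul, add_zero,
    zero_add]

theorem rank_mul_conjTranspose_self_add_rank_le {Φ W : Matrix ι κ 𝕂} (hW : W * Φᴴ = 0) :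
    (W * Wᴴ).rank + Φ.rank ≤ Fintype.card κ := by
  simpa only [rank_self_mul_conjTranspose, rank_conjTranspose] using
    rank_add_rank_le_card_of_mul_eq_zero hW

theorem finrank_ker_toEuclideanLin_add_rank [DecidableEq κ] (Φ : Matrix ι κ 𝕂) :
    Module.finrank 𝕂 (LinearMap.ker (toEuclideanLin Φ)) + Φ.rank = Fintype.card κ := by
  rw [rank_eq_finrank_range_toLin Φ (EuclideanSpace.basisFun ι 𝕂).toBasis
    (EuclideanSpace.basisFun κ 𝕂).toBasis, add_comm, ← toEuclideanLin_eq_toLin_orthonormal,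
    LinearMap.finrank_range_add_finrank_ker, finrank_euclideanSpace]

theorem exists_gram_eq_diagonal {E : Type*} [NormedAddCommGroup E] [InnerProductSpace 𝕂 E]
    [DecidableEq ι] (K : Submodule 𝕂 E) [FiniteDimensional 𝕂 K] {p : ι → ℝ} (hp : ∀ i, 0 ≤ p i)
    (hcard : Fintype.card {i // p i ≠ 0} ≤ Module.finrank 𝕂 K) :
    ∃ v : ι → E, (∀ i, v i ∈ K) ∧ gram 𝕂 v = diagonal fun i => (p i : 𝕂) := by
  obtain ⟨e⟩ := Function.Embedding.nonempty_of_card_le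
    (hcard.trans_eq (Fintype.card_fin _).symm)
  set b := stdOrthonormalBasis 𝕂 K
  let v : ι → E := fun i =>
    if h : p i = 0 then 0 else (√(p i) : 𝕂) • (b (e ⟨i, h⟩) : E)
  refine ⟨v, fun i => ?_, ?_⟩
  · unfold v; split_ifs
    · exact K.zero_mem
    · exact K.smul_mem _ (b _).2
  ext i j
  rw [gram_apply, diagonal_apply]
  by_cases hij : i = j
  · subst hij
    rw [if_pos rfl]
    by_cases hi : p i = 0
    · simp [v, hi]
    · have hb : ‖(b (e ⟨i, hi⟩) : E)‖ = 1 := b.orthonormal.1 _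
      simp only [v, dif_neg hi, inner_self_eq_norm_sq_to_K, norm_smul, hb, mul_one,
        RCLike.norm_ofReal, abs_of_nonneg (Real.sqrt_nonneg _)]
      norm_cast
      exact Real.sq_sqrt (hp i)
  · rw [if_neg hij]
    by_cases hi : p i = 0
    · simp [v, hi]
    by_cases hj : p j = 0
    · simp [v, hj]
    have hne : e ⟨i, hi⟩ ≠ e ⟨j, hj⟩ := fun h => hij (congrArg Subtype.val (e.injective h))
    simp only [v, dif_neg hi, dif_neg hj, inner_smul_left, inner_smul_right,
      ← Submodule.coe_inner, b.orthonormal.2 hne, mul_zero]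

theorem exists_mul_conjTranspose_eq_zero_and_eq_diagonal [DecidableEq ι] [DecidableEq κ]
    (Φ : Matrix ι κ 𝕂) {p : ι → ℝ} (hp : ∀ i, 0 ≤ p i)
    (hcard : Fintype.card {i // p i ≠ 0} + Φ.rank ≤ Fintype.card κ) :
    ∃ W : Matrix ι κ 𝕂, W * Φᴴ = 0 ∧ W * Wᴴ = diagonal fun i => (p i : 𝕂) := by
  have hK := finrank_ker_toEuclideanLin_add_rank Φ
  obtain ⟨v, hvK, hv⟩ := exists_gram_eq_diagonal (LinearMap.ker (toEuclideanLin Φ)) hp (by omega)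
  let M : Matrix κ ι 𝕂 := of fun k i => v i k
  have hΦM : Φ * M = 0 := by
    ext k i
    exact congrArg (· k) (LinearMap.mem_ker.mp (hvK i))
  refine ⟨Mᴴ, by simpa using congrArg conjTranspose hΦM, ?_⟩
  rw [conjTranspose_conjTranspose, ← hv, gram_eq_conjTranspose_mul (EuclideanSpace.basisFun κ 𝕂)]
  simp [M]

theorem diagonal_ofReal_inv_mul_diagonal_ofReal [DecidableEq ι] {μ : ι → ℝ}
    (hμ : ∀ i, μ i ≠ 0) :
    (diagonal fun i => (((μ i)⁻¹ : ℝ) : 𝕂)) * diagonal (fun i => (μ i : 𝕂)) = 1 := by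
  rw [diagonal_mul_diagonal, ← diagonal_one]
  congr 1
  ext i
  rw [← RCLike.ofReal_mul, inv_mul_cancel₀ (hμ i), RCLike.ofReal_one]

theorem IsTightDual.eq_inv_of_mul_conjTranspose_eq_diagonal [DecidableEq ι]
    {Φ Ψ : Matrix ι κ 𝕂} {c : ℝ} (h : IsTightDual Φ Ψ c)
    (hκ : Fintype.card κ < 2 * Fintype.card ι) (hΦ : Φ.rank = Fintype.card ι)
    {μ : ι → ℝ} (hS : Φ * Φᴴ = diagonal fun i => (μ i : 𝕂))
    {A : ℝ} (hA0 : 0 < A) (hA : IsLeast (Set.range μ) A) : c = A⁻¹ := by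
  have hμ : ∀ i, 0 < μ i := fun i => hA0.trans_le (hA.2 ⟨i, rfl⟩)
  set G : Matrix ι ι 𝕂 := diagonal fun i => (((μ i)⁻¹ : ℝ) : 𝕂)
  have hG : G * (Φ * Φᴴ) = 1 := hS ▸ diagonal_ofReal_inv_mul_diagonal_ofReal fun i => (hμ i).ne'
  set W := Ψ - G * Φ
  have hW : W * Φᴴ = 0 := by rw [Matrix.sub_mul, h.1, Matrix.mul_assoc, hG, sub_self]
  have hWW : W * Wᴴ = diagonal fun i => ((c - (μ i)⁻¹ : ℝ) : 𝕂) := by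
    have h2 := h.2
    rw [← sub_add_cancel Ψ (G * Φ), add_comm,
      add_mul_conjTranspose_self_of_mul_conjTranspose_eq_zero hG (isHermitian_diagonal_ofReal _)
        hW] at h2
    rw [eq_sub_of_add_eq' h2, smul_one_eq_diagonal, diagonal_sub]
    push_cast
    rfl
  have hle : ∀ i, (μ i)⁻¹ ≤ c := fun i => by
    have := (posSemidef_self_mul_conjTranspose W).diag_nonneg (i := i)
    rwa [hWW, diagonal_apply_eq, RCLike.ofReal_nonneg, sub_nonneg] at this
  obtain ⟨j, hj⟩ : ∃ j, c = (μ j)⁻¹ := by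
    by_contra! hne
    have hunits : ∀ i, ((c - (μ i)⁻¹ : ℝ) : 𝕂) ≠ 0 := fun i =>
      RCLike.ofReal_ne_zero.mpr (sub_ne_zero.mpr (hne i))
    have hrank := rank_mul_conjTranspose_self_add_rank_le hW
    rw [hWW, rank_diagonal, hΦ, Fintype.card_congr (Equiv.subtypeUnivEquiv hunits)] at hrank
    omega
  obtain ⟨i₀, hi₀⟩ := hA.1
  refine le_antisymm ?_ (hi₀ ▸ hle i₀)
  exact hj ▸ inv_anti₀ hA0 (hA.2 ⟨j, rfl⟩)

theorem exists_isTightDual_of_mul_conjTranspose_eq_diagonal [DecidableEq ι] [DecidableEq κ]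
    {Φ : Matrix ι κ 𝕂} (hκ : 2 * Fintype.card ι ≤ Fintype.card κ + 1)
    (hΦ : Φ.rank = Fintype.card ι) {μ : ι → ℝ} (hS : Φ * Φᴴ = diagonal fun i => (μ i : 𝕂))
    {A : ℝ} (hA0 : 0 < A) (hA : IsLeast (Set.range μ) A) : ∃ Ψ, IsTightDual Φ Ψ A⁻¹ := by
  have hμ : ∀ i, 0 < μ i := fun i => hA0.trans_le (hA.2 ⟨i, rfl⟩)
  set G : Matrix ι ι 𝕂 := diagonal fun i => (((μ i)⁻¹ : ℝ) : 𝕂)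
  have hG : G * (Φ * Φᴴ) = 1 := hS ▸ diagonal_ofReal_inv_mul_diagonal_ofReal fun i => (hμ i).ne'
  obtain ⟨i₀, hi₀⟩ := hA.1
  set p : ι → ℝ := fun i => A⁻¹ - (μ i)⁻¹
  have hp : ∀ i, 0 ≤ p i := fun i => sub_nonneg.mpr (inv_anti₀ hA0 (hA.2 ⟨i, rfl⟩))
  have hcard : Fintype.card {i // p i ≠ 0} < Fintype.card ι :=
    Fintype.card_subtype_lt (x := i₀) (by simp [p, hi₀])
  obtain ⟨W, hW, hWW⟩ := exists_mul_conjTranspose_eq_zero_and_eq_diagonal Φ hp (by omega)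
  refine ⟨G * Φ + W, by rw [Matrix.add_mul, Matrix.mul_assoc, hG, hW, add_zero], ?_⟩
  rw [add_mul_conjTranspose_self_of_mul_conjTranspose_eq_zero hG (isHermitian_diagonal_ofReal _)
    hW, hWW, diagonal_add, smul_one_eq_diagonal]
  congr 1
  ext i
  simp [p]

theorem HasSingularValues.range_eigenvalues {𝕂 : Type} [RCLike 𝕂] {n m : ℕ}
    {Φ : Matrix (Fin n) (Fin m) 𝕂} {σ : Fin n → ℝ} (hσ : HasSingularValues Φ σ) :
    Set.range (isHermitian_mul_conjTranspose_self Φ).eigenvalues =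
      Set.range fun i => σ i ^ 2 := by
  have h := (isHermitian_mul_conjTranspose_self Φ).roots_charpoly_eq_eigenvalues
  have hσroots := roots_multiset_prod_X_sub_C (Finset.univ.val.map fun i => ((σ i ^ 2 : ℝ) : 𝕂))
  have hprod : (Finset.univ.val.map fun i => X - C ((σ i ^ 2 : ℝ) : 𝕂)).prod =
      (Φ * Φᴴ).charpoly := by
    rw [hσ.2.2, Finset.prod_eq_multiset_prod]
    push_cast
    rfl
  rw [Multiset.map_map, Function.comp_def, hprod, h] at hσroots
  ext x
  have hx := congrArg (fun s => (x : 𝕂) ∈ s) hσroots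
  simp only [Multiset.mem_map, Finset.mem_val, Finset.mem_univ, true_and, Function.comp_apply,
    RCLike.ofReal_inj] at hx
  rw [Set.mem_range, Set.mem_range, hx]

theorem HasSingularValues.isLeast_range_sq {𝕂 : Type} [RCLike 𝕂] {n m : ℕ}
    {Φ : Matrix (Fin n) (Fin m) 𝕂} {σ : Fin n → ℝ} (hσ : HasSingularValues Φ σ) (hn : 1 ≤ n) :
    IsLeast (Set.range fun i => σ i ^ 2) (σ ⟨n - 1, by omega⟩ ^ 2) := by
  refine ⟨⟨_, rfl⟩, ?_⟩
  rintro _ ⟨i, rfl⟩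
  exact pow_le_pow_left₀ (hσ.2.1 _).le (hσ.1 (Fin.le_def.2 (Nat.le_sub_one_of_lt i.2))) 2

/-- Let `Φ` be a frame for `𝕂^n` with `m = 2n − 1` vectors and lower
frame bound `A` (the smallest eigenvalue of `Φ Φ*`). Then there exists a tight dual
frame of `Φ`, its frame bound necessarily being `1/A`: there is `Ψ` with `Ψ Φ* = I_n`
and `Ψ Ψ* = (1/A)·I_n`, and any tight dual frame `Ψ` with bound `c` has `c = 1/A`. -/
theorem tight_dual_of_eq_two_n_sub_one {𝕂 : Type} [RCLike 𝕂] {n m : ℕ}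
    (hn : 1 ≤ n) (hm : m = 2 * n - 1)
    (Φ : Matrix (Fin n) (Fin m) 𝕂) (hΦ : Φ.rank = n)
    (σ : Fin n → ℝ) (hσ : HasSingularValues Φ σ)
    (A : ℝ) (hA : A = σ ⟨n - 1, by omega⟩ ^ 2) :
    (∃ Ψ : Matrix (Fin n) (Fin m) 𝕂,
      Ψ * Φᴴ = 1 ∧ Ψ * Ψᴴ = ((1 / A : ℝ) : 𝕂) • (1 : Matrix (Fin n) (Fin n) 𝕂)) ∧
    ∀ (Ψ : Matrix (Fin n) (Fin m) 𝕂) (c : ℝ),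
      Ψ * Φᴴ = 1 → Ψ * Ψᴴ = (c : 𝕂) • (1 : Matrix (Fin n) (Fin n) 𝕂) →
      c = 1 / A := by
  set hS := isHermitian_mul_conjTranspose_self Φ
  set U : Matrix (Fin n) (Fin n) 𝕂 := ↑hS.eigenvectorUnitary
  have hU : U ∈ unitary (Matrix (Fin n) (Fin n) 𝕂) := hS.eigenvectorUnitary.2
  have hS' := star_eigenvectorUnitary_mul_mul_conjTranspose Φ hS
  have hΦ' : (star U * Φ).rank = Fintype.card (Fin n) := by
    rw [rank_unitary_mul (Unitary.star_mem hU), hΦ, Fintype.card_fin]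
  have hA0 : 0 < A := hA ▸ pow_pos (hσ.2.1 _) 2
  have hAleast : IsLeast (Set.range hS.eigenvalues) A :=
    hA ▸ hσ.range_eigenvalues ▸ hσ.isLeast_range_sq hn
  have hcard : Fintype.card (Fin m) + 1 = 2 * Fintype.card (Fin n) := by
    simp only [Fintype.card_fin]; omega
  rw [one_div]
  refine ⟨?_, fun Ψ c hdual htight => ?_⟩
  · obtain ⟨Ψ', hΨ'⟩ :=
      exists_isTightDual_of_mul_conjTranspose_eq_diagonal (by omega) hΦ' hS' hA0 hAleast
    have hUΨ' := hΨ'.unitary_mul hU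
    rw [← Matrix.mul_assoc, Unitary.mul_star_self_of_mem hU, Matrix.one_mul] at hUΨ'
    exact ⟨U * Ψ', hUΨ'⟩
  · have hΨ : IsTightDual Φ Ψ c := ⟨hdual, htight⟩
    exact (hΨ.unitary_mul (Unitary.star_mem hU)).eq_inv_of_mul_conjTranspose_eq_diagonal
      (by omega) hΦ' hS' hA0 hAleast
end

section
/- Let Φ be a frame for 𝕂^n with m vectors and singular values σ_1 ≥ ⋯ ≥ σ_n > 0. Let r ≤ m−n, let I ⊂ {1,…,n} with |I| = r, and let (q_i)_{i∈I} be reals satisfying q_i ≥ 1/σ_i for all i ∈ I. Then there exists a dual frame Ψ of Φ whose multiset of singular values contains {q_i : i ∈ I}; in fact there is a dual frame Ψ whose multiset of singular values equals {q_i : i ∈ I} ∪ {1/σ_i : i ∉ I}. -/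
/-!
Write `S = Φ Φ*` for the frame operator. If `T S = 1` and `N Φ* = 0`, then `Ψ = T Φ + N` is a dual
frame with `Ψ Ψ* = T + N N*`. Diagonalize `S = U diag(σ²) U*` with `U` unitary and take
`T = U diag(σ⁻²) U*`. Since `ker Φ` has dimension `m - n ≥ |I|`, it contains `|I|` orthonormal
vectors, and these build an `N` with `N Φ* = 0` and `N N* = diag(q² - σ⁻²)` on `I` (zero off `I`).
Then `Ψ Ψ* = U diag(ν) U*` with `ν i = q i²` on `I` and `σ i⁻²` off `I`.
-/

open Matrix Polynomial

theorem Equiv.exists_apply_eq_of_map_univ_eq {α β γ : Type*} [Fintype α] [Fintype β]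
    [DecidableEq γ] {f : α → γ} {g : β → γ}
    (h : Finset.univ.val.map f = Finset.univ.val.map g) : ∃ e : α ≃ β, ∀ a, g (e a) = f a := by
  classical
  refine ⟨Equiv.ofPreimageEquiv fun c => Fintype.equivOfCardEq ?_,
    Equiv.ofPreimageEquiv_map _⟩
  simpa [Multiset.count_map, Fintype.card_subtype, eq_comm, ← Finset.filter_val] using
    congrArg (Multiset.count c) h

namespace Matrix

section StarRing

variable {R : Type*} [CommRing R] [StarRing R]

theorem charpoly_conjStarAlgAut {n : Type*} [Fintype n] [DecidableEq n]
    (U : unitary (Matrix n n R)) (M : Matrix n n R) :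
    (Unitary.conjStarAlgAut R _ U M).charpoly = M.charpoly := by
  rw [Unitary.conjStarAlgAut_apply, charpoly_mul_comm, ← mul_assoc, Unitary.coe_star_mul_self,
    one_mul]

theorem submatrix_equiv_mem_unitaryGroup {n : Type*} [Fintype n] [DecidableEq n]
    {U : Matrix n n R} (hU : U ∈ unitaryGroup n R) (e₁ e₂ : n ≃ n) :
    U.submatrix e₁ e₂ ∈ unitaryGroup n R := by
  rw [mem_unitaryGroup_iff, star_eq_conjTranspose, conjTranspose_submatrix, submatrix_mul_equiv,
    ← star_eq_conjTranspose, mem_unitaryGroup_iff.mp hU, submatrix_one_equiv]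

variable {m n : Type*} [Fintype m] [Fintype n] [DecidableEq m]
  {Φ N : Matrix m n R} {T : Matrix m m R}

theorem mul_add_mul_conjTranspose_eq_one (hT : T * (Φ * Φᴴ) = 1) (hN : N * Φᴴ = 0) :
    (T * Φ + N) * Φᴴ = 1 := by
  rw [Matrix.add_mul, Matrix.mul_assoc, hT, hN, add_zero]

theorem mul_add_self_mul_conjTranspose (hT : T * (Φ * Φᴴ) = 1) (hT' : T.IsHermitian)
    (hN : N * Φᴴ = 0) : (T * Φ + N) * (T * Φ + N)ᴴ = T + N * Nᴴ := by
  have hΦN : Φ * Nᴴ = 0 := by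
    rw [← conjTranspose_conjTranspose Φ, ← conjTranspose_mul, hN, conjTranspose_zero]
  rw [conjTranspose_add, conjTranspose_mul, hT'.eq, Matrix.add_mul, Matrix.mul_add,
    Matrix.mul_add, ← Matrix.mul_assoc, Matrix.mul_assoc T, hT, Matrix.one_mul,
    Matrix.mul_assoc T, hΦN, Matrix.mul_zero, ← Matrix.mul_assoc, hN, Matrix.zero_mul, add_zero,
    zero_add]

end StarRing

variable {𝕂 : Type*} [RCLike 𝕂]

theorem IsHermitian.exists_unitary_eq_conjStarAlgAut_diagonal {n : Type*} [Fintype n]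
    [DecidableEq n] {A : Matrix n n 𝕂} (hA : A.IsHermitian) {μ : n → ℝ}
    (h : A.charpoly = ∏ i, (X - C (μ i : 𝕂))) :
    ∃ U : unitaryGroup n 𝕂, A = Unitary.conjStarAlgAut 𝕂 _ U (diagonal fun i => (μ i : 𝕂)) := by
  have hroots : Finset.univ.val.map (RCLike.ofReal ∘ μ : n → 𝕂) =
      Finset.univ.val.map (RCLike.ofReal ∘ hA.eigenvalues) := by
    rw [← hA.roots_charpoly_eq_eigenvalues, h,
      roots_prod _ _ (Finset.prod_ne_zero_iff.mpr fun i _ => X_sub_C_ne_zero _)]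
    simp
  obtain ⟨e, he⟩ := Equiv.exists_apply_eq_of_map_univ_eq hroots
  have hdiag : diagonal (fun i => (μ i : 𝕂)) =
      (diagonal (RCLike.ofReal ∘ hA.eigenvalues)).submatrix e e := by
    rw [submatrix_diagonal_equiv]
    exact congrArg diagonal (funext fun i => (he i).symm)
  refine ⟨⟨_, submatrix_equiv_mem_unitaryGroup hA.eigenvectorUnitary.2 (.refl n) e⟩, ?_⟩
  conv_lhs => rw [hA.spectral_theorem]
  simp only [Unitary.conjStarAlgAut_apply, hdiag, star_eq_conjTranspose, conjTranspose_submatrix,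
    submatrix_mul_equiv, Equiv.coe_refl, submatrix_id_id]

variable {m n : Type*} [Fintype n]

theorem exists_conjTranspose_mul_self_eq_one_and_mul_eq_zero {s : Type*} [Fintype s]
    [DecidableEq s] (Φ : Matrix m n 𝕂) (h : Fintype.card s + Φ.rank ≤ Fintype.card n) :
    ∃ V : Matrix n s 𝕂, Vᴴ * V = 1 ∧ Φ * V = 0 := by
  let L := Φ.mulVecLin ∘ₗ (WithLp.linearEquiv 2 𝕂 (n → 𝕂)).toLinearMap
  have hker : Fintype.card s ≤ Module.finrank 𝕂 (LinearMap.ker L) := by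
    have := L.finrank_range_add_finrank_ker
    rw [LinearMap.range_comp_of_range_eq_top _ (LinearEquiv.range _), finrank_euclideanSpace]
      at this
    rw [Matrix.rank] at h
    omega
  obtain ⟨f⟩ := Function.Embedding.nonempty_of_card_le (hker.trans_eq (Fintype.card_fin _).symm)
  let b := stdOrthonormalBasis 𝕂 (LinearMap.ker L)
  let v : s → EuclideanSpace 𝕂 n := fun a => b (f a)
  have hv : Orthonormal 𝕂 v :=
    (b.orthonormal.comp_linearIsometry (LinearMap.ker L).subtypeₗᵢ).comp f f.injective
  refine ⟨of fun j a => v a j, ?_, ?_⟩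
  · ext a a'
    simpa [mul_apply, one_apply, PiLp.inner_apply, mul_comm] using orthonormal_iff_ite.mp hv a a'
  · ext i a
    exact congrFun (b (f a)).2 i

theorem exists_mul_conjTranspose_eq_zero_and_self_mul_conjTranspose_eq_diagonal {ι : Type*}
    [DecidableEq ι] (Φ : Matrix m n 𝕂) (I : Finset ι) (h : I.card + Φ.rank ≤ Fintype.card n)
    {d : ι → ℝ} (hd : ∀ i ∈ I, 0 ≤ d i) :
    ∃ N : Matrix ι n 𝕂, N * Φᴴ = 0 ∧
      N * Nᴴ = diagonal fun i => if i ∈ I then (d i : 𝕂) else 0 := by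
  obtain ⟨V, hVV, hΦV⟩ :=
    Φ.exists_conjTranspose_mul_self_eq_one_and_mul_eq_zero (s := I) (by simpa using h)
  let P : Matrix ι I 𝕂 := of fun i a => if i = a then (√(d i) : 𝕂) else 0
  refine ⟨P * Vᴴ, ?_, ?_⟩
  · rw [Matrix.mul_assoc, ← conjTranspose_mul, hΦV, conjTranspose_zero, Matrix.mul_zero]
  · rw [conjTranspose_mul, conjTranspose_conjTranspose, Matrix.mul_assoc,
      ← Matrix.mul_assoc Vᴴ, hVV, Matrix.one_mul]
    ext i l
    by_cases hi : i ∈ I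
    · rw [mul_apply, Fintype.sum_eq_single ⟨i, hi⟩]
      · by_cases hil : i = l
        · subst hil
          simp [P, hi, ← RCLike.ofReal_mul, Real.mul_self_sqrt (hd i hi)]
        · simp [P, hil, Ne.symm hil]
      · intro a ha
        have hia : i ≠ a := fun h => ha (Subtype.ext h.symm)
        simp [P, hia]
    · have hia : ∀ a : I, i ≠ a := fun a h => hi (h ▸ a.2)
      simp [P, mul_apply, diagonal_apply, hi, hia]

theorem exists_dual_mul_conjTranspose_eq_conjStarAlgAut_diagonal [Fintype m] [DecidableEq m]
    (Φ : Matrix m n 𝕂) (U : unitaryGroup m 𝕂) {μ : m → ℝ} (hμ : ∀ i, μ i ≠ 0)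
    (hΦ : Φ * Φᴴ = Unitary.conjStarAlgAut 𝕂 _ U (diagonal fun i => (μ i : 𝕂)))
    (I : Finset m) (h : I.card + Φ.rank ≤ Fintype.card n) {ν : m → ℝ}
    (hν : ∀ i ∈ I, (μ i)⁻¹ ≤ ν i) :
    ∃ Ψ : Matrix m n 𝕂, Ψ * Φᴴ = 1 ∧ Ψ * Ψᴴ = Unitary.conjStarAlgAut 𝕂 _ U
      (diagonal fun i => ((if i ∈ I then ν i else (μ i)⁻¹ : ℝ) : 𝕂)) := by
  let conjU := Unitary.conjStarAlgAut 𝕂 (Matrix m m 𝕂) U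
  let T := conjU (diagonal fun i => ((μ i)⁻¹ : ℝ))
  have hT : T * (Φ * Φᴴ) = 1 := by
    have hinv : (fun i => (((μ i)⁻¹ : ℝ) : 𝕂) * (μ i : 𝕂)) = fun _ => 1 :=
      funext fun i => by rw [← RCLike.ofReal_mul, inv_mul_cancel₀ (hμ i), RCLike.ofReal_one]
    rw [hΦ, ← map_mul, diagonal_mul_diagonal, hinv, diagonal_one, map_one]
  have hT' : T.IsHermitian :=
    ((isHermitian_diagonal_of_self_adjoint _ (by ext i; simp [RCLike.star_def])).isSelfAdjoint.map
      conjU).isHermitian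
  obtain ⟨N, hNΦ, hNN⟩ := Φ.exists_mul_conjTranspose_eq_zero_and_self_mul_conjTranspose_eq_diagonal
    I h (d := fun i => ν i - (μ i)⁻¹) fun i hi => sub_nonneg.2 (hν i hi)
  have hUN : (U : Matrix m m 𝕂) * N * Φᴴ = 0 := by rw [Matrix.mul_assoc, hNΦ, Matrix.mul_zero]
  refine ⟨T * Φ + (U : Matrix m m 𝕂) * N, mul_add_mul_conjTranspose_eq_one hT hUN, ?_⟩
  rw [mul_add_self_mul_conjTranspose hT hT' hUN, conjTranspose_mul, ← Matrix.mul_assoc,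
    Matrix.mul_assoc _ N, hNN, ← star_eq_conjTranspose, ← Unitary.conjStarAlgAut_apply (S := 𝕂),
    ← map_add, diagonal_add]
  congr 2
  funext i
  split_ifs <;> push_cast <;> ring

end Matrix

theorem exists_dual_with_prescribed_partial_spectrum_general {𝕂 : Type} [RCLike 𝕂] {n m : ℕ}
    (Φ : Matrix (Fin n) (Fin m) 𝕂) (hΦ : Φ.rank = n)
    (σ : Fin n → ℝ) (hσ : HasSingularValues Φ σ)
    (r : ℕ) (hr : r ≤ m - n)
    (I : Finset (Fin n)) (hI : I.card = r)
    (q : Fin n → ℝ) (hq : ∀ i ∈ I, 1 / σ i ≤ q i) :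
    ∃ Ψ : Matrix (Fin n) (Fin m) 𝕂, Ψ * Φᴴ = 1 ∧
      (Ψ * Ψᴴ).charpoly =
        (∏ i ∈ I, (X - C ((q i : 𝕂) ^ 2))) *
        ∏ i ∈ Iᶜ, (X - C (((σ i)⁻¹ : 𝕂) ^ 2)) := by
  obtain ⟨-, hσpos, hcharpoly⟩ := hσ
  obtain ⟨U, hU⟩ := (isHermitian_mul_conjTranspose_self Φ).exists_unitary_eq_conjStarAlgAut_diagonal
    (μ := fun i => σ i ^ 2) (by simpa using hcharpoly)
  have hcard : I.card + Φ.rank ≤ Fintype.card (Fin m) := by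
    have := Φ.rank_le_width
    rw [hΦ, hI, Fintype.card_fin]
    omega
  obtain ⟨Ψ, hdual, hΨΨ⟩ := Φ.exists_dual_mul_conjTranspose_eq_conjStarAlgAut_diagonal U
    (fun i => (pow_pos (hσpos i) 2).ne') hU I hcard (ν := fun i => q i ^ 2) fun i hi => by
      rw [← inv_pow]
      exact pow_le_pow_left₀ (inv_nonneg.2 (hσpos i).le) (by simpa using hq i hi) 2
  refine ⟨Ψ, hdual, ?_⟩
  rw [hΨΨ, charpoly_conjStarAlgAut, charpoly_diagonal, ← Finset.prod_mul_prod_compl I]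
  congr 1 <;> refine Finset.prod_congr rfl fun i hi => ?_
  · simp [hi]
  · simp [Finset.mem_compl.mp hi]

/-- Let `Φ` be a frame for `𝕂^n` with `m` vectors and singular values
`σ_1 ≥ ⋯ ≥ σ_n > 0`. For `r ≤ m − n`, an index set `I ⊆ {1,…,n}` with `|I| = r`, and
reals `q_i ≥ 1/σ_i` (`i ∈ I`), there is a dual frame `Ψ` of `Φ` whose multiset of
singular values is exactly `{q_i : i ∈ I} ∪ {1/σ_i : i ∉ I}` (encoded by the
characteristic polynomial of `Ψ Ψ*`); in particular it contains `{q_i : i ∈ I}`. -/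
theorem exists_dual_with_prescribed_partial_spectrum {𝕂 : Type} [RCLike 𝕂] {n m : ℕ}
    (hnm : n ≤ m)
    (Φ : Matrix (Fin n) (Fin m) 𝕂) (hΦ : Φ.rank = n)
    (σ : Fin n → ℝ) (hσ : HasSingularValues Φ σ)
    (r : ℕ) (hr : r ≤ m - n)
    (I : Finset (Fin n)) (hI : I.card = r)
    (q : Fin n → ℝ) (hq : ∀ i ∈ I, 1 / σ i ≤ q i) :
    ∃ Ψ : Matrix (Fin n) (Fin m) 𝕂, Ψ * Φᴴ = 1 ∧
      (Ψ * Ψᴴ).charpoly =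
        (∏ i ∈ I, (X - C ((q i : 𝕂) ^ 2))) *
        ∏ i ∈ Iᶜ, (X - C (((σ i)⁻¹ : 𝕂) ^ 2)) :=
  exists_dual_with_prescribed_partial_spectrum_general Φ hΦ σ hσ r hr I hI q hq
end

section
/- Let Φ be a frame for 𝕂^n with m vectors, set r = m−n, and let σ_1 ≥ ⋯ ≥ σ_n > 0 be the singular values of Φ. Then for every dual frame Ψ of Φ with singular values σ^Ψ_1 ≥ ⋯ ≥ σ^Ψ_n arranged in non-increasing order, the following interlacing inequalities hold: σ^Ψ_i ≥ 1/σ_{n−i+1} for i = 1,…,r, and 1/σ_{n−i+1} ≤ σ^Ψ_i ≤ 1/σ_{n−i+r+1} for i = r+1,…,n. -/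
/-!
Write `S = Φ Φ*`. A dual frame splits as `Ψ = S⁻¹ Φ + W` with `W Φ* = 0`, hence
`Ψ Ψ* = S⁻¹ + W W*`. The eigenvalues of `S⁻¹` are the `1 / σ_{n-i+1}²`, and the perturbation
`W W*` is positive semidefinite of rank at most `m - n`, because `rank W + rank Φ ≤ m`.
A positive semidefinite perturbation can only raise the ordered eigenvalues, and one of rank at
most `r` raises the `i`-th eigenvalue at most to the `(i - r)`-th one: both follow from the
Courant–Fischer dimension count, using the kernel of the perturbation for the second.
-/

open Matrix Polynomial

open scoped InnerProductSpace

theorem Submodule.finrank_add_finrank_le_finrank_inf_add {K V : Type*} [DivisionRing K]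
    [AddCommGroup V] [Module K V] [FiniteDimensional K V] (s t : Submodule K V) :
    Module.finrank K s + Module.finrank K t ≤ Module.finrank K ↥(s ⊓ t) + Module.finrank K V := by
  rw [← s.finrank_sup_add_finrank_inf_eq t]
  have := (s ⊔ t).finrank_le
  omega

section

variable {𝕜 E : Type*} [RCLike 𝕜] [NormedAddCommGroup E] [InnerProductSpace 𝕜 E]

namespace OrthonormalBasis

section

variable {ι : Type*} [Fintype ι] {T : E →ₗ[𝕜] E} {b : OrthonormalBasis ι 𝕜 E} {μ : ι → ℝ}

theorem repr_apply_of_apply_eq_smul (hb : ∀ i, T (b i) = (μ i : 𝕜) • b i) (x : E) (i : ι) :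
    b.repr (T x) i = μ i * b.repr x i := by
  classical
  conv_lhs => rw [← b.sum_repr x]
  simp [hb, smul_smul, Pi.single_apply, mul_comm]

theorem re_inner_apply_self_of_apply_eq_smul (hb : ∀ i, T (b i) = (μ i : 𝕜) • b i) (x : E) :
    RCLike.re ⟪T x, x⟫_𝕜 = ∑ i, μ i * ‖b.repr x i‖ ^ 2 := by
  rw [← b.repr.inner_map_map, PiLp.inner_apply, map_sum]
  refine Finset.sum_congr rfl fun i _ => ?_
  rw [repr_apply_of_apply_eq_smul hb, RCLike.inner_apply, map_mul (starRingEnd 𝕜),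
    RCLike.conj_ofReal, mul_left_comm, RCLike.mul_conj]
  norm_cast

theorem finrank_span_image (b : OrthonormalBasis ι 𝕜 E) (s : Finset ι) :
    Module.finrank 𝕜 (Submodule.span 𝕜 (b '' s)) = s.card := by
  have := finrank_span_eq_card (b.orthonormal.linearIndependent.comp _ Subtype.val_injective
    (ι' := (s : Set ι)))
  rw [Set.range_comp, Subtype.range_coe] at this
  simpa using this

theorem repr_eq_zero_of_mem_span_image {s : Set ι} {x : E}
    (hx : x ∈ Submodule.span 𝕜 (b '' s)) {i : ι} (hi : i ∉ s) : b.repr x i = 0 := by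
  rw [← b.coe_toBasis, b.toBasis.mem_span_image] at hx
  rw [← b.coe_toBasis_repr_apply]
  exact Finsupp.notMem_support_iff.mp fun h => hi (hx h)

theorem norm_sq_eq_sum_repr (b : OrthonormalBasis ι 𝕜 E) (x : E) :
    ‖x‖ ^ 2 = ∑ i, ‖b.repr x i‖ ^ 2 := by
  simp only [b.repr_apply_apply, b.sum_sq_norm_inner_right]

theorem mul_norm_sq_le_re_inner_of_mem_span_image (hb : ∀ i, T (b i) = (μ i : 𝕜) • b i)
    {s : Set ι} {c : ℝ} (hc : ∀ i ∈ s, c ≤ μ i) {x : E} (hx : x ∈ Submodule.span 𝕜 (b '' s)) :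
    c * ‖x‖ ^ 2 ≤ RCLike.re ⟪T x, x⟫_𝕜 := by
  rw [b.norm_sq_eq_sum_repr, Finset.mul_sum, re_inner_apply_self_of_apply_eq_smul hb]
  refine Finset.sum_le_sum fun i _ => ?_
  by_cases hi : i ∈ s
  · exact mul_le_mul_of_nonneg_right (hc i hi) (sq_nonneg _)
  · simp [repr_eq_zero_of_mem_span_image hx hi]

theorem re_inner_le_mul_norm_sq_of_mem_span_image (hb : ∀ i, T (b i) = (μ i : 𝕜) • b i)
    {s : Set ι} {c : ℝ} (hc : ∀ i ∈ s, μ i ≤ c) {x : E} (hx : x ∈ Submodule.span 𝕜 (b '' s)) :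
    RCLike.re ⟪T x, x⟫_𝕜 ≤ c * ‖x‖ ^ 2 := by
  rw [b.norm_sq_eq_sum_repr, Finset.mul_sum, re_inner_apply_self_of_apply_eq_smul hb]
  refine Finset.sum_le_sum fun i _ => ?_
  by_cases hi : i ∈ s
  · exact mul_le_mul_of_nonneg_right (hc i hi) (sq_nonneg _)
  · simp [repr_eq_zero_of_mem_span_image hx hi]

end

variable {n : ℕ}

/-- A nonzero vector of `span {b' k | k ≤ i} ⊓ span {b k | j ≤ k} ⊓ K`, which exists by counting
dimensions, has Rayleigh quotient at least `μ' i` for `T'` and at most `μ j` for `T`. -/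
theorem eigenvalue_le_of_re_inner_le {T T' : E →ₗ[𝕜] E}
    {b b' : OrthonormalBasis (Fin n) 𝕜 E} {μ μ' : Fin n → ℝ} (hμ : Antitone μ)
    (hμ' : Antitone μ') (hb : ∀ i, T (b i) = (μ i : 𝕜) • b i)
    (hb' : ∀ i, T' (b' i) = (μ' i : 𝕜) • b' i) {K : Submodule 𝕜 E} {r : ℕ}
    (hK : n ≤ Module.finrank 𝕜 K + r)
    (hle : ∀ x ∈ K, RCLike.re ⟪T' x, x⟫_𝕜 ≤ RCLike.re ⟪T x, x⟫_𝕜)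
    {i j : Fin n} (hij : (j : ℕ) + r ≤ i) : μ' i ≤ μ j := by
  have := b.toBasis.finiteDimensional_of_finite
  set U := Submodule.span 𝕜 (b' '' ↑(Finset.Iic i))
  set V := Submodule.span 𝕜 (b '' ↑(Finset.Ici j))
  have hE : Module.finrank 𝕜 E = n := by simp [Module.finrank_eq_card_basis b.toBasis]
  have hU : Module.finrank 𝕜 U = i + 1 := by rw [b'.finrank_span_image, Fin.card_Iic]
  have hV : Module.finrank 𝕜 V = n - j := by rw [b.finrank_span_image, Fin.card_Ici]
  have h₁ := V.finrank_add_finrank_le_finrank_inf_add K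
  have h₂ := U.finrank_add_finrank_le_finrank_inf_add (V ⊓ K)
  obtain ⟨x, ⟨hxU, hxV, hxK⟩, hx⟩ : ∃ x ∈ U ⊓ (V ⊓ K), x ≠ 0 := by
    refine Submodule.exists_mem_ne_zero_of_ne_bot fun h => ?_
    rw [h, finrank_bot] at h₂
    omega
  have hlow := b'.mul_norm_sq_le_re_inner_of_mem_span_image hb' (c := μ' i)
    (fun k hk => hμ' (Finset.mem_Iic.mp hk)) hxU
  have hup := b.re_inner_le_mul_norm_sq_of_mem_span_image hb (c := μ j)
    (fun k hk => hμ (Finset.mem_Ici.mp hk)) hxV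
  have hxpos : 0 < ‖x‖ ^ 2 := by positivity
  exact le_of_mul_le_mul_right ((hlow.trans (hle x hxK)).trans hup) hxpos

theorem eigenvalue_le_of_isPositive_add {A P : E →ₗ[𝕜] E} (hP : P.IsPositive)
    {b c : OrthonormalBasis (Fin n) 𝕜 E} {α β : Fin n → ℝ} (hα : Antitone α) (hβ : Antitone β)
    (hb : ∀ i, A (b i) = (α i : 𝕜) • b i) (hc : ∀ i, (A + P) (c i) = (β i : 𝕜) • c i)
    (i : Fin n) : α i ≤ β i := by
  have := b.toBasis.finiteDimensional_of_finite
  refine c.eigenvalue_le_of_re_inner_le hβ hα hc hb (K := ⊤) (r := 0) ?_ (fun x _ => ?_) le_rfl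
  · simp [finrank_top, Module.finrank_eq_card_basis b.toBasis]
  · rw [LinearMap.add_apply, inner_add_left, map_add]
    linarith [hP.re_inner_nonneg_left x]

theorem eigenvalue_le_of_finrank_range_le {A P : E →ₗ[𝕜] E} {r : ℕ}
    (hP : Module.finrank 𝕜 (LinearMap.range P) ≤ r)
    {b c : OrthonormalBasis (Fin n) 𝕜 E} {α β : Fin n → ℝ} (hα : Antitone α) (hβ : Antitone β)
    (hb : ∀ i, A (b i) = (α i : 𝕜) • b i) (hc : ∀ i, (A + P) (c i) = (β i : 𝕜) • c i)
    {i j : Fin n} (hij : (j : ℕ) + r ≤ i) : β i ≤ α j := by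
  have := b.toBasis.finiteDimensional_of_finite
  refine b.eigenvalue_le_of_re_inner_le hα hβ hb hc (K := LinearMap.ker P) ?_ (fun x hx => ?_) hij
  · have := P.finrank_range_add_finrank_ker
    rw [Module.finrank_eq_card_basis b.toBasis, Fintype.card_fin] at this
    omega
  · rw [LinearMap.add_apply, LinearMap.mem_ker.mp hx, add_zero]

end OrthonormalBasis

theorem LinearMap.IsSymmetric.eigenvalues_eq_of_charpoly_eq [FiniteDimensional 𝕜 E] {n : ℕ}
    {T : E →ₗ[𝕜] E} (hT : T.IsSymmetric) (hn : Module.finrank 𝕜 E = n) {μ : Fin n → ℝ}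
    (hμ : Antitone μ) (h : T.charpoly = ∏ i, (X - C (μ i : 𝕜))) : hT.eigenvalues hn = μ := by
  rw [← List.ofFn_inj, ← hT.sort_roots_charpoly_eq_eigenvalues hn, h,
    roots_prod _ _ (Finset.prod_ne_zero_iff.mpr fun i _ => X_sub_C_ne_zero _)]
  simp only [roots_X_sub_C, Multiset.bind_singleton, Fin.univ_val_map, Multiset.map_coe,
    Multiset.coe_sort, List.map_ofFn, Function.comp_def, RCLike.ofReal_re]
  apply List.mergeSort_of_pairwise
  simp_rw [decide_eq_true_eq, ← List.sortedGE_iff_pairwise]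
  exact hμ.sortedGE_ofFn

end

theorem Matrix.det_eq_prod_of_charpoly_eq {R ι : Type*} [CommRing R] [Fintype ι] [DecidableEq ι]
    {A : Matrix ι ι R} {μ : ι → R} (h : A.charpoly = ∏ i, (X - C (μ i))) :
    A.det = ∏ i, μ i := by
  rw [det_eq_sign_charpoly_coeff, h, coeff_zero_eq_eval_zero, eval_prod]
  simp [Finset.prod_neg, ← mul_assoc, ← pow_add, ← two_mul]

section

open scoped ComplexOrder

variable {𝕜 l m : Type*} [RCLike 𝕜] [Fintype l] [DecidableEq l] [Fintype m]

theorem Matrix.toEuclideanLin_inv_apply_of_apply_eq_smul {S : Matrix l l 𝕜} (hS : IsUnit S.det)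
    {v : EuclideanSpace 𝕜 l} {c : 𝕜} (hc : c ≠ 0) (hv : toEuclideanLin S v = c • v) :
    toEuclideanLin S⁻¹ v = c⁻¹ • v := by
  have h : toEuclideanLin S⁻¹ (toEuclideanLin S v) = v := by
    rw [← LinearMap.comp_apply, ← toLpLin_mul_same, nonsing_inv_mul _ hS, toLpLin_one,
      LinearMap.id_apply]
  rw [hv, map_smul] at h
  exact (eq_inv_smul_iff₀ hc).mpr h

theorem Matrix.mul_conjTranspose_eq_inv_add {Φ Ψ : Matrix l m 𝕜} (hS : IsUnit (Φ * Φᴴ).det)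
    (hΨ : Ψ * Φᴴ = 1) :
    Ψ * Ψᴴ = (Φ * Φᴴ)⁻¹ + (Ψ - (Φ * Φᴴ)⁻¹ * Φ) * (Ψ - (Φ * Φᴴ)⁻¹ * Φ)ᴴ := by
  have hG : ((Φ * Φᴴ)⁻¹)ᴴ = (Φ * Φᴴ)⁻¹ := by
    rw [conjTranspose_nonsing_inv, conjTranspose_mul, conjTranspose_conjTranspose]
  have hΨ' : Φ * Ψᴴ = 1 := by
    simpa using congrArg conjTranspose hΨ
  simp only [conjTranspose_sub, conjTranspose_mul, hG, Matrix.sub_mul, Matrix.mul_sub,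
    ← Matrix.mul_assoc, hΨ, Matrix.one_mul]
  rw [Matrix.mul_assoc _ Φ Ψᴴ, hΨ', Matrix.mul_assoc _ Φ Φᴴ, nonsing_inv_mul _ hS, Matrix.mul_one,
    Matrix.one_mul]
  abel

theorem Matrix.rank_sub_inv_mul_le {Φ Ψ : Matrix l m 𝕜} (hS : IsUnit (Φ * Φᴴ).det)
    (hΨ : Ψ * Φᴴ = 1) : (Ψ - (Φ * Φᴴ)⁻¹ * Φ).rank ≤ Fintype.card m - Φ.rank := by
  have h : (Ψ - (Φ * Φᴴ)⁻¹ * Φ) * Φᴴ = 0 := by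
    rw [Matrix.sub_mul, hΨ, Matrix.mul_assoc, nonsing_inv_mul _ hS, sub_self]
  have := rank_add_rank_le_card_of_mul_eq_zero h
  rw [rank_conjTranspose] at this
  omega

theorem Matrix.isPositive_toEuclideanLin_mul_conjTranspose_self (A : Matrix l m 𝕜) :
    (toEuclideanLin (A * Aᴴ)).IsPositive :=
  isPositive_toEuclideanLin_iff.mpr (posSemidef_self_mul_conjTranspose A)

theorem Matrix.finrank_range_toEuclideanLin_mul_conjTranspose_self (A : Matrix l m 𝕜) :
    Module.finrank 𝕜 (LinearMap.range (toEuclideanLin (A * Aᴴ))) = A.rank := by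
  rw [toEuclideanLin_eq_toLin_orthonormal, ← rank_eq_finrank_range_toLin,
    rank_self_mul_conjTranspose]

theorem Matrix.IsHermitian.exists_orthonormalBasis_of_charpoly_eq {n : ℕ}
    {A : Matrix (Fin n) (Fin n) 𝕜} (hA : A.IsHermitian) {μ : Fin n → ℝ} (hμ : Antitone μ)
    (h : A.charpoly = ∏ i, (X - C (μ i : 𝕜))) :
    ∃ b : OrthonormalBasis (Fin n) 𝕜 (EuclideanSpace 𝕜 (Fin n)),
      ∀ i, toEuclideanLin A (b i) = (μ i : 𝕜) • b i := by
  have hT := isSymmetric_toEuclideanLin_iff.mpr hA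
  have hn := finrank_euclideanSpace_fin (𝕜 := 𝕜) (n := n)
  refine ⟨hT.eigenvectorBasis hn, fun i => ?_⟩
  rw [← hT.eigenvalues_eq_of_charpoly_eq hn hμ (by
    rw [toEuclideanLin_eq_toLin_orthonormal, charpoly_toLin, h])]
  exact hT.apply_eigenvectorBasis hn i

end

namespace HasSingularValues

variable {𝕂 : Type} [RCLike 𝕂] {n m : ℕ} {Φ : Matrix (Fin n) (Fin m) 𝕂} {σ : Fin n → ℝ}

theorem antitone_sq (hσ : HasSingularValues Φ σ) : Antitone fun i => σ i ^ 2 :=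
  fun _ _ hij => pow_le_pow_left₀ (hσ.2.1 _).le (hσ.1 hij) 2

theorem exists_orthonormalBasis (hσ : HasSingularValues Φ σ) :
    ∃ b : OrthonormalBasis (Fin n) 𝕂 (EuclideanSpace 𝕂 (Fin n)),
      ∀ i, toEuclideanLin (Φ * Φᴴ) (b i) = ((σ i ^ 2 : ℝ) : 𝕂) • b i :=
  (isHermitian_mul_conjTranspose_self Φ).exists_orthonormalBasis_of_charpoly_eq hσ.antitone_sq
    (by simpa using hσ.2.2)

theorem isUnit_det (hσ : HasSingularValues Φ σ) : IsUnit (Φ * Φᴴ).det := by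
  rw [det_eq_prod_of_charpoly_eq hσ.2.2, isUnit_iff_ne_zero, Finset.prod_ne_zero_iff]
  exact fun i _ => pow_ne_zero 2 (RCLike.ofReal_ne_zero.mpr (hσ.2.1 i).ne')

theorem antitone_inv_rev_sq (hσ : HasSingularValues Φ σ) :
    Antitone fun i : Fin n => (1 / σ i.rev) ^ 2 := fun i j hij => by
  simp only [div_pow, one_pow]
  exact one_div_le_one_div_of_le (pow_pos (hσ.2.1 _) 2) (hσ.antitone_sq (Fin.rev_le_rev.mpr hij))

theorem exists_orthonormalBasis_inv (hσ : HasSingularValues Φ σ) :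
    ∃ b : OrthonormalBasis (Fin n) 𝕂 (EuclideanSpace 𝕂 (Fin n)),
      ∀ i, toEuclideanLin (Φ * Φᴴ)⁻¹ (b i) = (((1 / σ i.rev) ^ 2 : ℝ) : 𝕂) • b i := by
  obtain ⟨b, hb⟩ := hσ.exists_orthonormalBasis
  refine ⟨b.reindex Fin.revPerm, fun i => ?_⟩
  rw [b.reindex_apply, toEuclideanLin_inv_apply_of_apply_eq_smul hσ.isUnit_det _ (hb _)]
  · simp [Fin.revPerm]
  · exact_mod_cast (pow_pos (hσ.2.1 _) 2).ne'

end HasSingularValues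

/-- Indices are 0-based: `τ i` is `σ^Ψ_{i+1}` and `σ ⟨n - 1 - i, _⟩` is `σ_{n-i}`. -/
theorem dual_singular_values_interlacing {𝕂 : Type} [RCLike 𝕂] {n m : ℕ}
    (Φ : Matrix (Fin n) (Fin m) 𝕂) (hΦ : Φ.rank = n)
    (σ : Fin n → ℝ) (hσ : HasSingularValues Φ σ)
    (Ψ : Matrix (Fin n) (Fin m) 𝕂) (hΨ : Ψ * Φᴴ = 1)
    (τ : Fin n → ℝ) (hτ : HasSingularValues Ψ τ) :
    (∀ i : Fin n, 1 / σ ⟨n - 1 - (i : ℕ), by have := i.isLt; omega⟩ ≤ τ i) ∧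
    (∀ i : Fin n, ∀ hi : m - n ≤ (i : ℕ),
      τ i ≤ 1 / σ ⟨n - 1 - (i : ℕ) + (m - n), by have := i.isLt; omega⟩) := by
  obtain ⟨b, hb⟩ := hσ.exists_orthonormalBasis_inv
  obtain ⟨c, hc⟩ := hτ.exists_orthonormalBasis
  rw [mul_conjTranspose_eq_inv_add hσ.isUnit_det hΨ, map_add] at hc
  have hP := isPositive_toEuclideanLin_mul_conjTranspose_self (Ψ - (Φ * Φᴴ)⁻¹ * Φ)
  have hrank := rank_sub_inv_mul_le hσ.isUnit_det hΨ
  rw [Fintype.card_fin, hΦ, ← finrank_range_toEuclideanLin_mul_conjTranspose_self] at hrank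
  refine ⟨fun i => ?_, fun i hi => ?_⟩
  · have hrev : (⟨n - 1 - i, by omega⟩ : Fin n) = i.rev :=
      Fin.ext (by rw [Fin.val_rev, Fin.val_mk]; omega)
    rw [hrev, ← pow_le_pow_iff_left₀ (one_div_pos.mpr (hσ.2.1 _)).le (hτ.2.1 i).le two_ne_zero]
    exact b.eigenvalue_le_of_isPositive_add hP hσ.antitone_inv_rev_sq hτ.antitone_sq hb hc i
  · obtain ⟨j, hj⟩ : ∃ j : Fin n, (j : ℕ) = i - (m - n) := ⟨⟨i - (m - n), by omega⟩, rfl⟩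
    have hrev : (⟨n - 1 - i + (m - n), by omega⟩ : Fin n) = j.rev :=
      Fin.ext (by rw [Fin.val_rev, Fin.val_mk]; omega)
    rw [hrev, ← pow_le_pow_iff_left₀ (hτ.2.1 i).le (one_div_pos.mpr (hσ.2.1 _)).le two_ne_zero]
    exact b.eigenvalue_le_of_finrank_range_le hrank hσ.antitone_inv_rev_sq hτ.antitone_sq hb hc
      (show (j : ℕ) + (m - n) ≤ i by omega)
end
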